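/- arXiv:1510.01963 — 14 statements merged into one kernel-verified Lean document; each statement's English description precedes it below -/
import Mathlib

section
/- Assume p ≥ 2. Let Z = {z ∈ ℝ^p : 0 < z_j < z^r_j for all j} and let S = {v ∈ ℝ^p : 0 ≦ v ≦ z^r and for every z ∈ Z, neither z ≤ v nor v ≤ z}. Then the set of points of S that are minimal in S with respect to the dominance relation ≤ is exactly the set of dummy points {ẑ^1, …, ẑ^p}. -/
open scoped BigOperators

/-- `z` weakly dominates `z'` (z ≦ z'). -/
def WDom {n : ℕ} (z z' : Fin n → ℝ) : Prop := ∀ j, z j ≤ z' j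

/-- `z` dominates `z'` (z ≤ z'). -/
def Dom {n : ℕ} (z z' : Fin n → ℝ) : Prop := WDom z z' ∧ z ≠ z'

/-- `z` strictly dominates `z'` (z < z'). -/
def SDom {n : ℕ} (z z' : Fin n → ℝ) : Prop := ∀ j, z j < z' j

/-- The dominated region `D(N)` with respect to the reference point `zr`. -/
def DomRegion {n : ℕ} (zr : Fin n → ℝ) (N : Set (Fin n → ℝ)) : Set (Fin n → ℝ) :=
  {x | ∃ z ∈ N, WDom z x ∧ WDom x zr}

/-- Property (P1): no point of `N` strictly dominates `u`. -/
def P1 {n : ℕ} (N : Set (Fin n → ℝ)) (u : Fin n → ℝ) : Prop := ¬ ∃ z ∈ N, SDom z u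

/-- The upper bound set `U(N)`: points of `[0, zr]` satisfying (P1) and maximal for it. -/
def UBSet {n : ℕ} (zr : Fin n → ℝ) (N : Set (Fin n → ℝ)) : Set (Fin n → ℝ) :=
  {u | WDom 0 u ∧ WDom u zr ∧ P1 N u ∧
       ∀ u', WDom 0 u' → WDom u' zr → Dom u u' → ¬ P1 N u'}

/-- The dummy point `ẑ^j`. -/
def zhat {n : ℕ} (zr : Fin n → ℝ) (j : Fin n) : Fin n → ℝ :=
  fun k => if k = j then zr j else 0

/-- `N̂ = N ∪ {ẑ^1, …, ẑ^p}`. -/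
def Nhat {n : ℕ} (zr : Fin n → ℝ) (N : Set (Fin n → ℝ)) : Set (Fin n → ℝ) :=
  N ∪ Set.range (zhat zr)

/-- A stable set: no point dominates another point of the set. -/
def Stable {n : ℕ} (N : Set (Fin n → ℝ)) : Prop :=
  ∀ z ∈ N, ∀ z' ∈ N, ¬ Dom z z'

/-- General position: no two distinct points share a coordinate value. -/
def GenPos {n : ℕ} (N : Set (Fin n → ℝ)) : Prop :=
  ∀ z ∈ N, ∀ z' ∈ N, z ≠ z' → ∀ j, z j ≠ z' j

/-- Membership in the open box `(0, zr)`. -/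
def InOpenBox {n : ℕ} (zr : Fin n → ℝ) (z : Fin n → ℝ) : Prop :=
  ∀ j, 0 < z j ∧ z j < zr j

/-- the minimal points (w.r.t. dominance) of the set S of points of [0, zr]
incomparable with every point of the open box Z = (0, zr) are exactly the dummy points. -/
theorem minimal_incomparable_eq_dummy
    (p : ℕ) (zr : Fin (p+2) → ℝ) (hzr : ∀ j, 0 < zr j)
    (S : Set (Fin (p+2) → ℝ))
    (hS : S = {v | WDom 0 v ∧ WDom v zr ∧
      ∀ z : Fin (p+2) → ℝ, InOpenBox zr z → ¬ Dom z v ∧ ¬ Dom v z}) :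
    {v ∈ S | ∀ w ∈ S, ¬ Dom w v} = Set.range (zhat zr) := by
  -- helper: any member of S has a coordinate equal to zr
  have exists_top : ∀ v : Fin (p+2) → ℝ, WDom 0 v → WDom v zr →
      (∀ z, InOpenBox zr z → ¬ Dom z v ∧ ¬ Dom v z) → ∃ m, v m = zr m := by
    intro v h0 hr hinc
    by_contra h
    push_neg at h
    have hlt : ∀ j, v j < zr j := fun j => lt_of_le_of_ne (hr j) (h j)
    have hbox : InOpenBox zr (fun j => (v j + zr j) / 2) := by
      intro j
      have h1 : (0:ℝ) ≤ v j := h0 j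
      have h2 := hzr j
      have h3 := hlt j
      exact ⟨by show (0:ℝ) < (v j + zr j)/2; linarith,
             by show (v j + zr j)/2 < zr j; linarith⟩
    refine (hinc _ hbox).2 ⟨fun j => by show v j ≤ (v j + zr j)/2; linarith [hlt j], fun he => ?_⟩
    have h4 : v 0 = (v 0 + zr 0)/2 := congrFun he 0
    linarith [hlt 0]
  -- helper: the dummy points are in S
  have zhat_mem : ∀ j : Fin (p+2), zhat zr j ∈ S := by
    intro j
    rw [hS]
    refine ⟨fun k => ?_, fun k => ?_, fun z hz => ⟨?_, ?_⟩⟩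
    · show (0:ℝ) ≤ zhat zr j k
      simp only [zhat]
      split <;> [exact (hzr j).le; exact le_refl 0]
    · simp only [zhat]
      split
      · next hk => rw [hk]
      · exact (hzr k).le
    · rintro ⟨hw, -⟩
      obtain ⟨k, hk⟩ := exists_ne j
      have := hw k
      simp only [zhat, if_neg hk] at this
      exact absurd this (not_le.mpr (hz k).1)
    · rintro ⟨hw, -⟩
      have := hw j
      simp only [zhat, if_pos rfl] at this
      exact absurd this (not_le.mpr (hz j).2)
  ext v
  simp only [Set.mem_setOf_eq, Set.mem_range]
  constructor
  · rintro ⟨hvS, hmin⟩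
    have hv := hS ▸ hvS
    obtain ⟨h0, hr, hinc⟩ := hv
    obtain ⟨m, hm⟩ := exists_top v h0 hr hinc
    refine ⟨m, ?_⟩
    by_contra hne
    refine hmin _ (zhat_mem m) ⟨fun k => ?_, hne⟩
    simp only [zhat]
    split
    · next hk => rw [hk, ← hm]
    · exact h0 k
  · rintro ⟨j, rfl⟩
    refine ⟨zhat_mem j, ?_⟩
    intro w hwS ⟨hwd, hne⟩
    apply hne
    have hw := hS ▸ hwS
    obtain ⟨h0, hr, hinc⟩ := hw
    obtain ⟨m, hm⟩ := exists_top w h0 hr hinc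
    have hmj : m = j := by
      by_contra hmj
      have := hwd m
      simp only [zhat, if_neg hmj] at this
      have := le_antisymm this (h0 m)
      rw [this] at hm
      exact absurd hm.symm (ne_of_gt (hzr m))
    funext k
    simp only [zhat]
    split
    · next hk => rw [hk, ← hmj, hm, hmj]
    · next hk =>
      have h1 := hwd k
      simp only [zhat, if_neg hk] at h1
      exact le_antisymm h1 (h0 k)
end

section
/- Let N be any subset of the open box (0, z^r) = {z ∈ ℝ^p : 0 < z_j < z^r_j for all j}, and let N̂ = N ∪ {ẑ^1, …, ẑ^p}. Then the upper bound sets coincide: U(N̂) = U(N). -/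
open scoped BigOperators

lemma p1_nhat_iff {p : ℕ} (zr : Fin p → ℝ) (N : Set (Fin p → ℝ))
    (u : Fin p → ℝ) (hu : WDom u zr) :
    P1 (Nhat zr N) u ↔ P1 N u := by
  constructor
  · intro h ⟨z, hz, hs⟩
    exact h ⟨z, Or.inl hz, hs⟩
  · intro h ⟨z, hz, hs⟩
    rcases hz with hz | ⟨j, rfl⟩
    · exact h ⟨z, hz, hs⟩
    · have := hs j
      simp [zhat] at this
      exact absurd (hu j) (not_le.mpr this)

/-- For N a subset of the open box (0, zr) and N̂ = N ∪ {ẑ^1,…,ẑ^p},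
the upper bound sets coincide: U(N̂) = U(N). -/
theorem ubset_nhat_eq_ubset
    (p : ℕ) (hp : 1 ≤ p) (zr : Fin p → ℝ) (hzr : ∀ j, 0 < zr j)
    (N : Set (Fin p → ℝ)) (hbox : ∀ z ∈ N, InOpenBox zr z) :
    UBSet zr (Nhat zr N) = UBSet zr N := by
  ext u
  simp only [UBSet, Set.mem_setOf_eq]
  constructor
  · rintro ⟨h0, hzr', hP1, hmax⟩
    refine ⟨h0, hzr', (p1_nhat_iff zr N u hzr').mp hP1, ?_⟩
    intro u' h0' hzr'' hd hP
    exact hmax u' h0' hzr'' hd ((p1_nhat_iff zr N u' hzr'').mpr hP)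
  · rintro ⟨h0, hzr', hP1, hmax⟩
    refine ⟨h0, hzr', (p1_nhat_iff zr N u hzr').mpr hP1, ?_⟩
    intro u' h0' hzr'' hd hP
    exact hmax u' h0' hzr'' hd ((p1_nhat_iff zr N u' hzr'').mp hP)
end

section
/- Let N be a finite subset of the open box (0, z^r). Then every local upper bound u ∈ U(N) satisfies u_j > 0 for all j ∈ {1,…,p}. -/
open scoped BigOperators

/-- every local upper bound of a finite subset of the open box (0, zr)
has positive coordinates. -/
theorem ubset_pos
    (p : ℕ) (hp : 1 ≤ p) (zr : Fin p → ℝ) (hzr : ∀ j, 0 < zr j)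
    (N : Set (Fin p → ℝ)) (hN : N.Finite) (hbox : ∀ z ∈ N, InOpenBox zr z) :
    ∀ u ∈ UBSet zr N, ∀ j, 0 < u j := by
  rintro u ⟨h0, hzru, hP1, hmax⟩ j
  by_contra hle
  have huj : u j = 0 := le_antisymm (not_lt.mp hle) (h0 j)
  -- find c > 0 with c ≤ zr j and c ≤ z j for all z ∈ N
  obtain ⟨c, hc0, hczr, hcN⟩ :
      ∃ c : ℝ, 0 < c ∧ c ≤ zr j ∧ ∀ z ∈ N, c ≤ z j := by
    rcases N.eq_empty_or_nonempty with hNe | hNe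
    · exact ⟨zr j, hzr j, le_refl _, by simp [hNe]⟩
    · obtain ⟨z₀, hz₀, hz₀min⟩ :=
        Set.exists_min_image N (fun z => z j) hN hNe
      refine ⟨min (zr j) (z₀ j), lt_min (hzr j) ((hbox z₀ hz₀ j).1), min_le_left _ _,
        fun z hz => le_trans (min_le_right _ _) (hz₀min z hz)⟩
  set u' : Fin p → ℝ := Function.update u j (c / 2) with hu'
  have hu'j : u' j = c / 2 := by simp [hu']
  have hu'k : ∀ k, k ≠ j → u' k = u k := fun k hk => Function.update_of_ne hk _ _
  have h0' : WDom 0 u' := by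
    intro k
    by_cases hk : k = j
    · subst hk; rw [hu'j]; positivity
    · rw [hu'k k hk]; exact h0 k
  have hzr' : WDom u' zr := by
    intro k
    by_cases hk : k = j
    · subst hk; rw [hu'j]; linarith
    · rw [hu'k k hk]; exact hzru k
  have hdom : Dom u u' := by
    constructor
    · intro k
      by_cases hk : k = j
      · subst hk; rw [hu'j, huj]; positivity
      · rw [hu'k k hk]
    · intro h
      have := congrFun h j
      rw [hu'j, huj] at this
      linarith
  have hP1' : P1 N u' := by
    rintro ⟨z, hz, hsd⟩
    have h1 := hsd j
    rw [hu'j] at h1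
    have h2 := hcN z hz
    linarith
  exact hmax u' h0' hzr' hdom hP1'
end

section
/- Let N be a finite stable subset of the open box (0, z^r) that is in general position. Then for every u ∈ U(N) and every j ∈ {1,…,p} there exists a j-th defining point of u, that is, a point z ∈ N̂ with z_j = u_j and z_k < u_k for all k ≠ j. -/
open scoped BigOperators

/-- existence of defining points: for every u ∈ U(N) and every j there is a
point z ∈ N̂ with z_j = u_j and z_k < u_k for all k ≠ j. -/
theorem exists_defining_point
    (p : ℕ) (hp : 1 ≤ p) (zr : Fin p → ℝ) (hzr : ∀ j, 0 < zr j)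
    (N : Set (Fin p → ℝ)) (hN : N.Finite) (hbox : ∀ z ∈ N, InOpenBox zr z)
    (hstab : Stable N) (hgp : GenPos N) :
    ∀ u ∈ UBSet zr N, ∀ j : Fin p,
      ∃ z ∈ Nhat zr N, z j = u j ∧ ∀ k, k ≠ j → z k < u k := by
  intro u hu j
  obtain ⟨hu0, huzr, hP1, hmax⟩ := hu
  -- helper: build an update point and apply maximality
  have key : ∀ (i : Fin p) (c : ℝ), u i < c → c ≤ zr i →
      ∃ z ∈ N, SDom z (Function.update u i c) := by
    intro i c hc hczr
    have h0 : WDom 0 (Function.update u i c) := by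
      intro k
      by_cases hk : k = i
      · subst hk; rw [Function.update_self]
        exact le_trans (hu0 k) hc.le
      · rw [Function.update_of_ne hk]; exact hu0 k
    have h1 : WDom (Function.update u i c) zr := by
      intro k
      by_cases hk : k = i
      · subst hk; rw [Function.update_self]; exact hczr
      · rw [Function.update_of_ne hk]; exact huzr k
    have h2 : Dom u (Function.update u i c) := by
      constructor
      · intro k
        by_cases hk : k = i
        · subst hk; rw [Function.update_self]; exact hc.le
        · rw [Function.update_of_ne hk]
      · intro hh
        have := congrFun hh i
        rw [Function.update_self] at this
        exact hc.ne this
    have := hmax _ h0 h1 h2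
    rw [P1, not_not] at this
    exact this
  have upos : ∀ k, 0 < u k := by
    intro k
    rcases lt_or_eq_of_le (hu0 k) with h | h
    · exact h
    exfalso
    have h' : u k ≤ 0 := le_of_eq h.symm
    rcases N.eq_empty_or_nonempty with hNe | hNne
    · obtain ⟨z, hz, -⟩ := key k (zr k) (lt_of_le_of_lt h' (hzr k)) le_rfl
      rw [hNe] at hz; exact hz
    · obtain ⟨z0, hz0N, hz0min⟩ := hN.toFinset.exists_min_image (fun z => z k)
        (by rwa [← hN.coe_toFinset, Finset.coe_nonempty] at hNne)
      rw [Set.Finite.mem_toFinset] at hz0N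
      obtain ⟨z, hzN, hzS⟩ := key k (z0 k) (lt_of_le_of_lt h' (hbox z0 hz0N k).1) (hbox z0 hz0N k).2.le
      have h1 := hzS k
      rw [Function.update_self] at h1
      exact absurd h1 (not_lt.mpr (hz0min z (hN.mem_toFinset.mpr hzN)))
  rcases eq_or_lt_of_le (huzr j) with hj | hj
  · refine ⟨zhat zr j, Or.inr ⟨j, rfl⟩, ?_, ?_⟩
    · simp [zhat, hj]
    · intro k hk; simp only [zhat, if_neg hk]; exact upos k
  · set S := hN.toFinset.filter (fun z => ∀ k, k ≠ j → z k < u k) with hS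
    have mem_S : ∀ {c : ℝ} {z : Fin p → ℝ}, z ∈ N → SDom z (Function.update u j c) →
        z ∈ S := by
      intro c z hzN hzS
      refine Finset.mem_filter.mpr ⟨hN.mem_toFinset.mpr hzN, fun k hk => ?_⟩
      have h2 := hzS k
      rwa [Function.update_of_ne hk] at h2
    have hSne : S.Nonempty := by
      obtain ⟨z, hzN, hzS⟩ := key j (zr j) hj le_rfl
      exact ⟨z, mem_S hzN hzS⟩
    obtain ⟨z0, hz0S, hz0min⟩ := S.exists_min_image (fun z => z j) hSne
    have hz0N : z0 ∈ N := hN.mem_toFinset.mp (Finset.mem_filter.mp hz0S).1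
    have hz0lt : ∀ k, k ≠ j → z0 k < u k := (Finset.mem_filter.mp hz0S).2
    have hge : u j ≤ z0 j := by
      by_contra hlt
      push_neg at hlt
      refine hP1 ⟨z0, hz0N, fun k => ?_⟩
      by_cases hk : k = j
      · subst hk; exact hlt
      · exact hz0lt k hk
    have hle2 : z0 j ≤ u j := by
      by_contra hgt
      push_neg at hgt
      obtain ⟨z, hzN, hzS⟩ := key j (min (z0 j) (zr j)) (lt_min hgt hj) (min_le_right _ _)
      have h1 := hzS j
      rw [Function.update_self] at h1
      exact absurd (lt_of_lt_of_le h1 (min_le_left _ _))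
        (not_lt.mpr (hz0min z (mem_S hzN hzS)))
    exact ⟨z0, Or.inl hz0N, le_antisymm hle2 hge, hz0lt⟩
end

section
/- Let N be a finite stable subset of the open box (0, z^r) that is in general position, and let u ∈ U(N). Then for each j ∈ {1,…,p} there is at most one point z ∈ N̂ with z_j = u_j and z_k < u_k for all k ≠ j. Moreover, if z is a j-th defining point of u and z' is a j'-th defining point of u with j ≠ j', then z ≠ z'. -/
open scoped BigOperators

/-- uniqueness of the j-th defining point of a local upper bound, and
distinctness of defining points for distinct indices. -/
theorem defining_point_unique
    (p : ℕ) (hp : 1 ≤ p) (zr : Fin p → ℝ) (hzr : ∀ j, 0 < zr j)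
    (N : Set (Fin p → ℝ)) (hN : N.Finite) (hbox : ∀ z ∈ N, InOpenBox zr z)
    (hstab : Stable N) (hgp : GenPos N)
    (u : Fin p → ℝ) (hu : u ∈ UBSet zr N) :
    (∀ j : Fin p, ∀ z ∈ Nhat zr N, ∀ z' ∈ Nhat zr N,
        (z j = u j ∧ ∀ k, k ≠ j → z k < u k) →
        (z' j = u j ∧ ∀ k, k ≠ j → z' k < u k) → z = z') ∧
    (∀ j j' : Fin p, j ≠ j' → ∀ z ∈ Nhat zr N, ∀ z' ∈ Nhat zr N,
        (z j = u j ∧ ∀ k, k ≠ j → z k < u k) →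
        (z' j' = u j' ∧ ∀ k, k ≠ j' → z' k < u k) → z ≠ z') := by
  obtain ⟨hu0, huzr, _, _⟩ := hu
  -- any dummy defining point for index j must be zhat zr j
  have dummy_eq : ∀ (j : Fin p) (m : Fin p), (zhat zr m) j = u j →
      (∀ k, k ≠ j → (zhat zr m) k < u k) → m = j := by
    intro j m h1 h2
    by_contra hmj
    have := h2 m hmj
    simp [zhat] at this
    exact absurd (huzr m) (not_le.mpr this)
  constructor
  · intro j z hz z' hz' ⟨h1, h2⟩ ⟨h1', h2'⟩
    -- N point can't be j-defining when a dummy is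
    have noMix : ∀ w ∈ N, ∀ m, (zhat zr m) j = u j → (∀ k, k ≠ j → (zhat zr m) k < u k) →
        w j = u j → False := by
      intro w hw m hd1 hd2 hw1
      have hmj := dummy_eq j m hd1 hd2
      subst hmj
      have : (zhat zr m) m = zr m := by simp [zhat]
      rw [this] at hd1
      have := (hbox w hw m).2
      rw [hw1, ← hd1] at this
      exact lt_irrefl _ this
    rcases hz with hzN | ⟨m, rfl⟩
    · rcases hz' with hz'N | ⟨m', rfl⟩
      · by_contra hne
        exact hgp z hzN z' hz'N hne j (h1.trans h1'.symm)
      · exact absurd (noMix z hzN m' h1' h2' h1) id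
    · rcases hz' with hz'N | ⟨m', rfl⟩
      · exact absurd (noMix z' hz'N m h1 h2 h1') id
      · rw [dummy_eq j m h1 h2, dummy_eq j m' h1' h2']
  · intro j j' hjj' z hz z' hz' ⟨h1, _⟩ ⟨_, h2'⟩ heq
    have := h2' j hjj'
    rw [← heq, h1] at this
    exact lt_irrefl _ this
end

section
/- Let N be a finite stable subset of the open box (0, z^r) in general position, and for each u ∈ U(N) and each j let z^j(u) denote the (unique) j-th defining point of u. Define B(u) = [z^1_1(u), z^r_1] × ∏_{j=2}^p [max_{k<j} z^k_j(u), u_j), a product of one closed interval and p−1 half-open intervals. Then the boxes are pairwise disjoint: for any distinct u, u' ∈ U(N), B(u) ∩ B(u') = ∅. -/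
open scoped BigOperators

/-- The box B(u) = [zd(1)_1, zr_1] × ∏_{j=2}^p [max_{k<j} zd(k)_j, u_j), where zd k is the
k-th defining point of u.  (Membership in the half-open interval with lower bound
max_{k<j} zd(k)_j is expressed by the conjunction of the inequalities zd(k)_j ≤ x_j, k < j.) -/
def Bset (p : ℕ) (zr : Fin (p+2) → ℝ) (zd : Fin (p+2) → (Fin (p+2) → ℝ))
    (u : Fin (p+2) → ℝ) : Set (Fin (p+2) → ℝ) :=
  {x | (zd 0 0 ≤ x 0 ∧ x 0 ≤ zr 0) ∧
       ∀ j : Fin (p+2), j ≠ 0 → ((∀ k < j, zd k j ≤ x j) ∧ x j < u j)}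

/-- Key lemma: if `x` lies in the box of `u` and strictly below `u'` in all
coordinates except possibly 0, and `j` is the least index where `u`, `u'` differ,
with `u j < u' j`, then the `j`-th defining point of `u` strictly dominates `u'`,
a contradiction. -/
lemma key_disjoint {p : ℕ} (zr : Fin (p+2) → ℝ) (N : Set (Fin (p+2) → ℝ))
    (u u' : Fin (p+2) → ℝ) (zd : Fin (p+2) → (Fin (p+2) → ℝ))
    (hzd : ∀ k, zd k ∈ Nhat zr N ∧ zd k k = u k ∧ ∀ m, m ≠ k → zd k m < u m)
    (hu'zr : WDom u' zr) (hP1' : P1 N u')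
    (x : Fin (p+2) → ℝ) (hx : x ∈ Bset p zr zd u)
    (hxu' : ∀ m : Fin (p+2), m ≠ 0 → x m < u' m)
    (j : Fin (p+2)) (hmin : ∀ m, m < j → u m = u' m) (hj : u j < u' j) : False := by
  have hS : SDom (zd j) u' := by
    intro m
    rcases lt_trichotomy m j with h | h | h
    · calc zd j m < u m := (hzd j).2.2 m (ne_of_lt h)
        _ = u' m := hmin m h
    · subst h
      calc zd m m = u m := (hzd m).2.1
        _ < u' m := hj
    · have hm0 : m ≠ 0 := by
        intro h0
        subst h0
        exact absurd h (not_lt.mpr (Fin.zero_le j))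
      calc zd j m ≤ x m := (hx.2 m hm0).1 j h
        _ < u' m := hxu' m hm0
  rcases (hzd j).1 with hN | ⟨i, hi⟩
  · exact hP1' ⟨zd j, hN, hS⟩
  · have h1 : zd j i = zr i := by rw [← hi]; simp [zhat]
    have h2 := hS i
    have h3 := hu'zr i
    linarith [h1 ▸ h2]

/-- the boxes B(u), u ∈ U(N), are pairwise disjoint. -/
theorem boxes_pairwise_disjoint
    (p : ℕ) (zr : Fin (p+2) → ℝ) (hzr : ∀ j, 0 < zr j)
    (N : Set (Fin (p+2) → ℝ)) (hN : N.Finite) (hbox : ∀ z ∈ N, InOpenBox zr z)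
    (hstab : Stable N) (hgp : GenPos N)
    (zdef : (Fin (p+2) → ℝ) → Fin (p+2) → (Fin (p+2) → ℝ))
    (hdef : ∀ u ∈ UBSet zr N, ∀ j, zdef u j ∈ Nhat zr N ∧ zdef u j j = u j ∧
            ∀ k, k ≠ j → zdef u j k < u k)
    (u u' : Fin (p+2) → ℝ) (hu : u ∈ UBSet zr N) (hu' : u' ∈ UBSet zr N) (hne : u ≠ u') :
    Bset p zr (zdef u) u ∩ Bset p zr (zdef u') u' = ∅ := by
  rw [Set.eq_empty_iff_forall_notMem]
  rintro x ⟨hx, hx'⟩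
  -- the set of differing indices is nonempty
  have hsne : (Finset.univ.filter (fun j : Fin (p+2) => u j ≠ u' j)).Nonempty := by
    obtain ⟨j, hj⟩ := Function.ne_iff.mp hne
    exact ⟨j, by simp [hj]⟩
  set s := Finset.univ.filter (fun j : Fin (p+2) => u j ≠ u' j) with hs
  set j := s.min' hsne with hjdef
  have hjmem : j ∈ s := Finset.min'_mem s hsne
  have hjne : u j ≠ u' j := by simpa [hs] using hjmem
  have hmin : ∀ m, m < j → u m = u' m := by
    intro m hm
    by_contra h
    have hms : m ∈ s := by simp [hs, h]
    exact absurd (Finset.min'_le s m hms) (not_le.mpr hm)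
  have hxu : ∀ m : Fin (p+2), m ≠ 0 → x m < u m := fun m hm => (hx.2 m hm).2
  have hxu' : ∀ m : Fin (p+2), m ≠ 0 → x m < u' m := fun m hm => (hx'.2 m hm).2
  rcases lt_or_gt_of_ne hjne with hlt | hgt
  · exact key_disjoint zr N u u' (zdef u) (fun k => hdef u hu k)
      hu'.2.1 hu'.2.2.1 x hx hxu' j hmin hlt
  · exact key_disjoint zr N u' u (zdef u') (fun k => hdef u' hu' k)
      hu.2.1 hu.2.2.1 x hx' hxu j (fun m hm => (hmin m hm).symm) hgt
end

section
/- Let N be a finite stable subset of the open box (0, z^r) in general position, and for each u ∈ U(N) and each j let z^j(u) denote the (unique) j-th defining point of u. Then U(N) is a finite set, and the p-dimensional Lebesgue measure of the dominated region D(N) equals the sum over u ∈ U(N) of (z^r_1 − z^1_1(u)) · ∏_{j=2}^p (u_j − max_{k<j} z^k_j(u)). -/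
open scoped BigOperators

/-!
Call `x` generic if none of its coordinates equals the corresponding coordinate of a point of
`N̂ ∪ U(N)`; almost every point is generic. Put
`B(u) = [z⁰₀(u), zr₀] × ∏_{j ≠ 0} [max_{k<j} zᵏⱼ(u), uⱼ]`. A generic point of `B(u)` lies in
its interior and is dominated by `z⁰(u) ∈ N`. Conversely, a generic `x ∈ D(N)` lies in the
interior of `B(u)` for the lexicographically largest `u ∈ U(N)` with `xⱼ ≤ uⱼ` for all `j ≠ 0`:
if `xⱼ < zᵏⱼ(u)` for some `k < j`, lowering `uⱼ` to `zᵏⱼ(u)` and raising `uₖ` slightly yields a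
(P1) point, whose upper bound is lexicographically larger than `u`. The interiors are disjoint:
if `u` and `u'` first differ at `i` with `uᵢ < u'ᵢ`, then `zⁱ(u)` strictly dominates `u'`.
Hence `D(N)` is, up to a null set, the almost disjoint union of the boxes `B(u)`.
-/

open MeasureTheory

theorem Pi.toLex_lt_of_le_of_lt {ι β : Type*} [LinearOrder ι] [WellFoundedLT ι] [PartialOrder β]
    {a b : ι → β} {j k : ι} (hle : ∀ m < j, a m ≤ b m) (hkj : k < j) (hk : a k < b k) :
    toLex a < toLex b := by
  obtain ⟨i, hi, hmin⟩ := wellFounded_lt.has_min {m | a m ≠ b m} ⟨k, hk.ne⟩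
  have hij : i < j := (not_lt.1 (hmin k hk.ne)).trans_lt hkj
  exact ⟨i, fun m hm => not_not.1 fun h => hmin m h hm, (hle i hij).lt_of_ne hi⟩

theorem Set.Finite.exists_gap {S : Set ℝ} (hS : S.Finite) {a b : ℝ} (hab : a < b) :
    ∃ c, a < c ∧ c ≤ b ∧ ∀ s ∈ S, s < c → s ≤ a := by
  let T := insert b (hS.inter_of_left (Set.Ioi a)).toFinset
  have hT : T.Nonempty := Finset.insert_nonempty _ _
  refine ⟨T.min' hT, (Finset.lt_min'_iff _ _).2 fun t ht => ?_,
    T.min'_le _ (Finset.mem_insert_self _ _), fun s hs hsc => not_lt.1 fun has => ?_⟩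
  · rcases Finset.mem_insert.1 ht with rfl | ht
    · exact hab
    · exact ((Set.Finite.mem_toFinset _).1 ht).2
  · exact hsc.not_ge (T.min'_le _ (Finset.mem_insert_of_mem (by simp [hs, has])))

theorem ae_forall_apply_ne {ι : Type*} [Fintype ι] {S : Set (ι → ℝ)} (hS : S.Countable) :
    ∀ᵐ (x : ι → ℝ) ∂volume, ∀ z ∈ S, ∀ j, x j ≠ z j := by
  refine (ae_ball_iff hS).2 fun z _ => ae_all_iff.2 fun j => ?_
  rw [volume_pi]
  exact Measure.ae_eval_ne (fun _ : ι => (volume : Measure ℝ)) j (z j)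

section UpperBoundSet

variable {n : ℕ} {zr : Fin n → ℝ} {N : Set (Fin n → ℝ)}

theorem isClosed_setOf_p1 : IsClosed {a : Fin n → ℝ | P1 N a} := by
  have h : {a : Fin n → ℝ | P1 N a} = ⋂ z ∈ N, (⋂ j, {a : Fin n → ℝ | z j < a j})ᶜ := by
    ext a
    simp [P1, SDom]
  rw [h]
  exact isClosed_biInter fun z _ => (isOpen_iInter_of_finite fun j =>
    isOpen_lt continuous_const (continuous_apply j)).isClosed_compl

theorem exists_mem_ubSet_wdom {a : Fin n → ℝ} (h0 : WDom 0 a) (hzr : WDom a zr) (ha : P1 N a) :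
    ∃ u ∈ UBSet zr N, WDom a u := by
  let S := Set.Icc a zr ∩ {a : Fin n → ℝ | P1 N a}
  have hS : IsCompact S := isCompact_Icc.inter_right isClosed_setOf_p1
  obtain ⟨u, ⟨⟨hau, huzr⟩, hu⟩, hmax⟩ := hS.exists_isMaxOn ⟨a, ⟨le_rfl, hzr⟩, ha⟩
    (continuous_finsetSum Finset.univ fun j _ => continuous_apply j).continuousOn
  refine ⟨u, ⟨fun j => (h0 j).trans (hau j), huzr, hu, fun u' _ hu'zr hdom hu' => ?_⟩, hau⟩
  have hsum : ∑ j, u j < ∑ j, u' j := by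
    obtain ⟨j, hj⟩ := Function.ne_iff.1 hdom.2
    exact Finset.sum_lt_sum (fun j _ => hdom.1 j) ⟨j, Finset.mem_univ _, (hdom.1 j).lt_of_ne hj⟩
  exact hsum.not_ge (hmax ⟨⟨hau.trans hdom.1, hu'zr⟩, hu'⟩)

theorem exists_mem_ubSet_forall_ne_le (hbox : ∀ z ∈ N, InOpenBox zr z) {x : Fin n → ℝ}
    (hx0 : WDom 0 x) (hxzr : WDom x zr) (i : Fin n) :
    ∃ u ∈ UBSet zr N, ∀ j ≠ i, x j ≤ u j := by
  let y := Function.update x i 0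
  have hy0 : WDom 0 y := fun j => by
    rcases eq_or_ne j i with rfl | hj
    · simp [y]
    · simpa [y, hj] using hx0 j
  have hyzr : WDom y zr := fun j => by
    rcases eq_or_ne j i with rfl | hj
    · simpa [y] using (hx0 j).trans (hxzr j)
    · simpa [y, hj] using hxzr j
  have hy : P1 N y := fun ⟨z, hz, hzy⟩ => by
    simpa [y] using (hbox z hz i).1.trans (hzy i)
  obtain ⟨u, hu, hyu⟩ := exists_mem_ubSet_wdom hy0 hyzr hy
  exact ⟨u, hu, fun j hj => by simpa [y, hj] using hyu j⟩

def DefiningPoints (zr : Fin n → ℝ) (N : Set (Fin n → ℝ))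
    (zdef : (Fin n → ℝ) → Fin n → (Fin n → ℝ)) : Prop :=
  ∀ u ∈ UBSet zr N, ∀ j, zdef u j ∈ Nhat zr N ∧ zdef u j j = u j ∧ ∀ k, k ≠ j → zdef u j k < u k

variable {zdef : (Fin n → ℝ) → Fin n → (Fin n → ℝ)} {u : Fin n → ℝ}

namespace DefiningPoints

theorem mem_or_eq_zhat (hdef : DefiningPoints zr N zdef) (hu : u ∈ UBSet zr N) (j : Fin n) :
    zdef u j ∈ N ∨ zdef u j = zhat zr j := by
  obtain ⟨hz | ⟨m, hm⟩, -, hlt⟩ := hdef u hu j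
  · exact Or.inl hz
  · rcases eq_or_ne m j with rfl | hmj
    · exact Or.inr hm.symm
    · have := hlt m hmj
      simp only [← hm, zhat, if_pos] at this
      exact absurd (hu.2.1 m) this.not_ge

theorem mem_of_lt (hdef : DefiningPoints zr N zdef) (hu : u ∈ UBSet zr N) {j : Fin n}
    (h : u j < zr j) : zdef u j ∈ N := by
  refine (hdef.mem_or_eq_zhat hu j).resolve_right fun hz => h.ne ?_
  rw [← (hdef u hu j).2.1, hz]
  simp [zhat]

theorem mem_of_pos (hdef : DefiningPoints zr N zdef) (hu : u ∈ UBSet zr N) {j k : Fin n}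
    (hjk : j ≠ k) (h : 0 < zdef u k j) : zdef u k ∈ N :=
  (hdef.mem_or_eq_zhat hu k).resolve_right fun hz => h.ne' (by simp [hz, zhat, hjk])

end DefiningPoints

theorem finite_ubSet (hN : N.Finite) (hdef : DefiningPoints zr N zdef) : (UBSet zr N).Finite := by
  have hpi : (Set.univ.pi fun _ : Fin n => Nhat zr N).Finite :=
    Set.Finite.pi fun _ => hN.union (Set.finite_range _)
  refine Set.Finite.of_finite_image (f := zdef) (hpi.subset ?_)
    fun u hu u' hu' h => funext fun j => ?_
  · rintro _ ⟨u, hu, rfl⟩ j -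
    exact (hdef u hu j).1
  · rw [← (hdef u hu j).2.1, ← (hdef u' hu' j).2.1, congrFun h j]

theorem exists_ubSet_shift (hN : N.Finite) (hbox : ∀ z ∈ N, InOpenBox zr z) (hgp : GenPos N)
    (hdef : DefiningPoints zr N zdef) (hu : u ∈ UBSet zr N) {j k : Fin n} (hjk : j ≠ k)
    (hz : zdef u k ∈ N) :
    ∃ u' ∈ UBSet zr N, zdef u k j ≤ u' j ∧ (∀ m ≠ j, u m ≤ u' m) ∧ u k < u' k := by
  obtain ⟨-, hkk, hlt⟩ := hdef u hu k
  have hukzr : u k < zr k := hkk ▸ (hbox _ hz k).2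
  obtain ⟨c, hukc, hczr, hgap⟩ := (hN.image fun z => z k).exists_gap hukzr
  let y := Function.update (Function.update u k c) j (zdef u k j)
  have hyj : y j = zdef u k j := by simp [y]
  have hyk : y k = c := by simp [y, hjk.symm]
  have hym : ∀ m ≠ j, m ≠ k → y m = u m := fun m hmj hmk => by simp [y, hmj, hmk]
  have huy : ∀ m ≠ j, u m ≤ y m := fun m hmj => by
    rcases eq_or_ne m k with rfl | hmk
    · exact hyk ▸ hukc.le
    · exact (hym m hmj hmk).ge
  have hy0 : WDom 0 y := fun m => by
    rcases eq_or_ne m j with rfl | hmj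
    · exact hyj ▸ (hbox _ hz m).1.le
    · exact (hu.1 m).trans (huy m hmj)
  have hyzr : WDom y zr := fun m => by
    rcases eq_or_ne m j with rfl | hmj
    · exact hyj ▸ (hbox _ hz m).2.le
    rcases eq_or_ne m k with rfl | hmk
    · exact hyk ▸ hczr
    · exact (hym m hmj hmk).trans_le (hu.2.1 m)
  have hy : P1 N y := by
    rintro ⟨z, hzN, hzy⟩
    have hzj : z j < zdef u k j := hyj ▸ hzy j
    have hzk : z k < u k := by
      refine (hgap _ ⟨z, hzN, rfl⟩ (hyk ▸ hzy k)).lt_of_ne ?_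
      rw [← hkk]
      exact hgp z hzN _ hz (by rintro rfl; exact hzj.false) k
    refine hu.2.2.1 ⟨z, hzN, fun m => ?_⟩
    rcases eq_or_ne m j with rfl | hmj
    · exact hzj.trans (hlt m hjk)
    rcases eq_or_ne m k with rfl | hmk
    · exact hzk
    · exact hym m hmj hmk ▸ hzy m
  obtain ⟨u', hu', hyu'⟩ := exists_mem_ubSet_wdom hy0 hyzr hy
  exact ⟨u', hu', hyj ▸ hyu' j, fun m hmj => (huy m hmj).trans (hyu' m),
    hukc.trans_le (hyk ▸ hyu' k)⟩

def IsGeneric (zr : Fin n → ℝ) (N : Set (Fin n → ℝ)) (x : Fin n → ℝ) : Prop :=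
  ∀ z ∈ Nhat zr N ∪ UBSet zr N, ∀ j, x j ≠ z j

theorem IsGeneric.apply_ne_zr {x : Fin n → ℝ} (hx : IsGeneric zr N x) (j : Fin n) :
    x j ≠ zr j := by
  simpa [zhat] using hx (zhat zr j) (Or.inl (Or.inr ⟨j, rfl⟩)) j

theorem ae_isGeneric (hN : N.Finite) (hU : (UBSet zr N).Finite) :
    ∀ᵐ x ∂volume, IsGeneric zr N x :=
  ae_forall_apply_ne ((hN.union (Set.finite_range _)).union hU).countable

end UpperBoundSet

section Boxes

variable {n : ℕ} {zr : Fin (n + 1) → ℝ} {N : Set (Fin (n + 1) → ℝ)}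
  {zdef : (Fin (n + 1) → ℝ) → Fin (n + 1) → (Fin (n + 1) → ℝ)} {u u' x : Fin (n + 1) → ℝ}

/-- Adding `0` to the index set changes nothing for `j ≠ 0` and makes the `0`-th coordinate
`zdef u 0 0`. -/
def lowerCorner (zdef : (Fin (n + 1) → ℝ) → Fin (n + 1) → (Fin (n + 1) → ℝ))
    (u : Fin (n + 1) → ℝ) : Fin (n + 1) → ℝ :=
  fun j => (insert 0 (Finset.Iio j)).sup' (Finset.insert_nonempty _ _) fun k => zdef u k j

def upperCorner (zr u : Fin (n + 1) → ℝ) : Fin (n + 1) → ℝ :=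
  Function.update u 0 (zr 0)

def ubBox (zr : Fin (n + 1) → ℝ) (zdef : (Fin (n + 1) → ℝ) → Fin (n + 1) → (Fin (n + 1) → ℝ))
    (u : Fin (n + 1) → ℝ) : Set (Fin (n + 1) → ℝ) :=
  Set.Icc (lowerCorner zdef u) (upperCorner zr u)

def ubOpenBox (zr : Fin (n + 1) → ℝ)
    (zdef : (Fin (n + 1) → ℝ) → Fin (n + 1) → (Fin (n + 1) → ℝ)) (u : Fin (n + 1) → ℝ) :
    Set (Fin (n + 1) → ℝ) :=
  {x | SDom (lowerCorner zdef u) x ∧ SDom x (upperCorner zr u)}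

theorem lowerCorner_zero : lowerCorner zdef u 0 = zdef u 0 0 := by
  simp [lowerCorner, ← bot_eq_zero]

theorem lowerCorner_of_ne_zero {j : Fin (n + 1)} (hj : j ≠ 0) :
    lowerCorner zdef u j =
      (Finset.Iio j).sup' ⟨0, Finset.mem_Iio.2 (Fin.pos_of_ne_zero hj)⟩ fun k => zdef u k j :=
  Finset.sup'_congr _ (Finset.insert_eq_self.2 (Finset.mem_Iio.2 (Fin.pos_of_ne_zero hj)))
    fun _ _ => rfl

theorem le_lowerCorner {j k : Fin (n + 1)} (hk : k ∈ insert 0 (Finset.Iio j)) :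
    zdef u k j ≤ lowerCorner zdef u j :=
  Finset.le_sup' (fun k => zdef u k j) hk

theorem upperCorner_zero : upperCorner zr u 0 = zr 0 :=
  Function.update_self ..

theorem upperCorner_of_ne_zero {j : Fin (n + 1)} (hj : j ≠ 0) : upperCorner zr u j = u j := by
  simp [upperCorner, hj]

theorem upperCorner_wdom (hu : WDom u zr) : WDom (upperCorner zr u) zr := fun j => by
  rcases eq_or_ne j 0 with rfl | hj
  · exact upperCorner_zero.le
  · exact (upperCorner_of_ne_zero hj).trans_le (hu j)

theorem lowerCorner_le_upperCorner (hdef : DefiningPoints zr N zdef) (hu : u ∈ UBSet zr N)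
    (j : Fin (n + 1)) : lowerCorner zdef u j ≤ upperCorner zr u j := by
  rcases eq_or_ne j 0 with rfl | hj
  · rw [lowerCorner_zero, upperCorner_zero, (hdef u hu 0).2.1]
    exact hu.2.1 0
  · rw [lowerCorner_of_ne_zero hj, upperCorner_of_ne_zero hj]
    exact Finset.sup'_le _ _ fun k hk => ((hdef u hu k).2.2 j (Finset.mem_Iio.1 hk).ne').le

theorem ubOpenBox_subset_ubBox : ubOpenBox zr zdef u ⊆ ubBox zr zdef u :=
  fun _ hx => ⟨fun j => (hx.1 j).le, fun j => (hx.2 j).le⟩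

theorem ubOpenBox_subset_domRegion (hdef : DefiningPoints zr N zdef) (hu : u ∈ UBSet zr N) :
    ubOpenBox zr zdef u ⊆ DomRegion zr N := by
  rintro x ⟨hlo, hhi⟩
  have hxzr : WDom x zr := fun j => (hhi j).le.trans (upperCorner_wdom hu.2.1 j)
  have hu0 : u 0 < zr 0 := by
    have := (hlo 0).trans (hhi 0)
    rwa [lowerCorner_zero, (hdef u hu 0).2.1, upperCorner_zero] at this
  exact ⟨zdef u 0, hdef.mem_of_lt hu hu0,
    fun j => (le_lowerCorner (Finset.mem_insert_self 0 _)).trans (hlo j).le, hxzr⟩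

theorem mem_ubOpenBox_of_isGeneric (hdef : DefiningPoints zr N zdef) (hu : u ∈ UBSet zr N)
    (hx : IsGeneric zr N x) (hxB : x ∈ ubBox zr zdef u) : x ∈ ubOpenBox zr zdef u := by
  refine ⟨fun j => (hxB.1 j).lt_of_ne ?_, fun j => (hxB.2 j).lt_of_ne ?_⟩
  · obtain ⟨k, -, hk⟩ :=
      Finset.exists_mem_eq_sup' (Finset.insert_nonempty 0 (Finset.Iio j)) fun k => zdef u k j
    rw [lowerCorner, hk]
    exact (hx _ (Or.inl (hdef u hu k).1) j).symm
  · rcases eq_or_ne j 0 with rfl | hj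
    · exact upperCorner_zero ▸ hx.apply_ne_zr 0
    · rw [upperCorner_of_ne_zero hj]
      exact hx u (Or.inr hu) j

theorem not_toLex_lt_of_mem_ubOpenBox (hdef : DefiningPoints zr N zdef) (hu : u ∈ UBSet zr N)
    (hu' : u' ∈ UBSet zr N) (hx : x ∈ ubOpenBox zr zdef u) (hx' : x ∈ ubOpenBox zr zdef u') :
    ¬ toLex u < toLex u' := by
  rintro ⟨i, hagree, hi⟩
  obtain ⟨-, hii, hlt⟩ := hdef u hu i
  refine hu'.2.2.1 ⟨zdef u i, hdef.mem_of_lt hu (hi.trans_le (hu'.2.1 i)), fun m => ?_⟩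
  rcases lt_trichotomy m i with hm | rfl | hm
  · exact (hlt m hm.ne).trans_eq (hagree m hm)
  · exact hii.trans_lt hi
  · calc zdef u i m ≤ lowerCorner zdef u m :=
          le_lowerCorner (Finset.mem_insert_of_mem (Finset.mem_Iio.2 hm))
      _ < x m := hx.1 m
      _ < upperCorner zr u' m := hx'.2 m
      _ = u' m := upperCorner_of_ne_zero ((Fin.zero_le i).trans_lt hm).ne'

theorem eq_of_mem_ubOpenBox (hdef : DefiningPoints zr N zdef) (hu : u ∈ UBSet zr N)
    (hu' : u' ∈ UBSet zr N) (hx : x ∈ ubOpenBox zr zdef u) (hx' : x ∈ ubOpenBox zr zdef u') :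
    u = u' :=
  toLex.injective <| le_antisymm
    (not_lt.1 (not_toLex_lt_of_mem_ubOpenBox hdef hu' hu hx' hx))
    (not_lt.1 (not_toLex_lt_of_mem_ubOpenBox hdef hu hu' hx hx'))

theorem zdef_apply_lt_of_toLex_maximal (hN : N.Finite) (hbox : ∀ z ∈ N, InOpenBox zr z)
    (hgp : GenPos N) (hdef : DefiningPoints zr N zdef) (hx : IsGeneric zr N x) (hx0 : WDom 0 x)
    (hu : u ∈ UBSet zr N) (hxu : ∀ j ≠ 0, x j ≤ u j)
    (hmax : ∀ u' ∈ UBSet zr N, (∀ j ≠ 0, x j ≤ u' j) → toLex u' ≤ toLex u)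
    {j k : Fin (n + 1)} (hkj : k < j) : zdef u k j < x j := by
  refine lt_of_not_ge fun hle => ?_
  have hlt : x j < zdef u k j := hle.lt_of_ne (hx _ (Or.inl (hdef u hu k).1) j)
  obtain ⟨u', hu', hj', hm', hk'⟩ := exists_ubSet_shift hN hbox hgp hdef hu hkj.ne'
    (hdef.mem_of_pos hu hkj.ne' ((hx0 j).trans_lt hlt))
  refine (hmax u' hu' fun m hm => ?_).not_gt
    (Pi.toLex_lt_of_le_of_lt (fun m hm => hm' m hm.ne) hkj hk')
  rcases eq_or_ne m j with rfl | hmj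
  · exact hlt.le.trans hj'
  · exact (hxu m hm).trans (hm' m hmj)

theorem exists_mem_ubOpenBox (hN : N.Finite) (hbox : ∀ z ∈ N, InOpenBox zr z) (hgp : GenPos N)
    (hdef : DefiningPoints zr N zdef) (hx : IsGeneric zr N x) (hxD : x ∈ DomRegion zr N) :
    ∃ u ∈ UBSet zr N, x ∈ ubOpenBox zr zdef u := by
  classical
  obtain ⟨z, hzN, hzx, hxzr⟩ := hxD
  have hzx' : SDom z x := fun j => (hzx j).lt_of_ne (hx z (Or.inl (Or.inl hzN)) j).symm
  have hx0 : WDom 0 x := fun j => ((hbox z hzN j).1.trans (hzx' j)).le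
  have hU := finite_ubSet hN hdef
  let T := hU.toFinset.filter fun u => ∀ j ≠ 0, x j ≤ u j
  obtain ⟨u₀, hu₀, hxu₀⟩ := exists_mem_ubSet_forall_ne_le hbox hx0 hxzr 0
  obtain ⟨u, huT, hmax⟩ :=
    T.exists_max_image toLex ⟨u₀, Finset.mem_filter.2 ⟨hU.mem_toFinset.2 hu₀, hxu₀⟩⟩
  simp only [T, Finset.mem_filter, Set.Finite.mem_toFinset, and_imp] at huT hmax
  obtain ⟨hu, hxu⟩ := huT
  have hxu' : ∀ j ≠ 0, x j < u j := fun j hj => (hxu j hj).lt_of_ne (hx u (Or.inr hu) j)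
  have hu0 : u 0 < x 0 := lt_of_not_ge fun h => hu.2.2.1 ⟨z, hzN, fun j => by
    rcases eq_or_ne j 0 with rfl | hj
    · exact (hzx' 0).trans_le h
    · exact (hzx' j).trans (hxu' j hj)⟩
  refine ⟨u, hu, fun j => (Finset.sup'_lt_iff _).2 fun k hk => ?_, fun j => ?_⟩
  · have hlex {j k : Fin (n + 1)} (hkj : k < j) : zdef u k j < x j :=
      zdef_apply_lt_of_toLex_maximal hN hbox hgp hdef hx hx0 hu hxu hmax hkj
    rcases Finset.mem_insert.1 hk with rfl | hk
    · rcases eq_or_ne j 0 with rfl | hj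
      · rwa [(hdef u hu 0).2.1]
      · exact hlex (Fin.pos_of_ne_zero hj)
    · exact hlex (Finset.mem_Iio.1 hk)
  · rcases eq_or_ne j 0 with rfl | hj
    · exact upperCorner_zero ▸ (hxzr 0).lt_of_ne (hx.apply_ne_zr 0)
    · rw [upperCorner_of_ne_zero hj]
      exact hxu' j hj

theorem domRegion_ae_eq_biUnion_ubBox (hN : N.Finite) (hbox : ∀ z ∈ N, InOpenBox zr z)
    (hgp : GenPos N) (hdef : DefiningPoints zr N zdef) (hU : (UBSet zr N).Finite)
    (hgen : ∀ᵐ x ∂volume, IsGeneric zr N x) :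
    DomRegion zr N =ᵐ[volume] ⋃ u ∈ hU.toFinset, ubBox zr zdef u := by
  refine Filter.eventuallyEq_set.2 (hgen.mono fun x hx => ?_)
  simp only [Set.mem_iUnion, Set.Finite.mem_toFinset, exists_prop]
  refine ⟨fun hxD => ?_, fun ⟨u, hu, hxu⟩ => ?_⟩
  · obtain ⟨u, hu, hxu⟩ := exists_mem_ubOpenBox hN hbox hgp hdef hx hxD
    exact ⟨u, hu, ubOpenBox_subset_ubBox hxu⟩
  · exact ubOpenBox_subset_domRegion hdef hu (mem_ubOpenBox_of_isGeneric hdef hu hx hxu)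

theorem aedisjoint_ubBox (hdef : DefiningPoints zr N zdef) (hgen : ∀ᵐ x ∂volume, IsGeneric zr N x)
    (hu : u ∈ UBSet zr N) (hu' : u' ∈ UBSet zr N) (hne : u ≠ u') :
    AEDisjoint volume (ubBox zr zdef u) (ubBox zr zdef u') :=
  measure_eq_zero_iff_ae_notMem.2 <| hgen.mono fun _ hx ⟨hxu, hxu'⟩ =>
    hne (eq_of_mem_ubOpenBox hdef hu hu' (mem_ubOpenBox_of_isGeneric hdef hu hx hxu)
      (mem_ubOpenBox_of_isGeneric hdef hu' hx hxu'))

theorem volume_ubBox (hdef : DefiningPoints zr N zdef) (hu : u ∈ UBSet zr N) :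
    volume (ubBox zr zdef u) = ENNReal.ofReal ((zr 0 - zdef u 0 0) *
      ∏ j ∈ (Finset.univ.erase (0 : Fin (n + 1))).attach,
        (u j.1 - (Finset.Iio j.1).sup'
          ⟨0, Finset.mem_Iio.mpr (Fin.pos_of_ne_zero (Finset.ne_of_mem_erase j.2))⟩
          (fun k => zdef u k j.1))) := by
  rw [ubBox, Real.volume_Icc_pi, ← ENNReal.ofReal_prod_of_nonneg fun j _ =>
      sub_nonneg.2 (lowerCorner_le_upperCorner hdef hu j),
    ← Finset.mul_prod_erase _ _ (Finset.mem_univ 0), upperCorner_zero, lowerCorner_zero,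
    ← Finset.prod_attach]
  congr 2
  refine Finset.prod_congr rfl fun j _ => ?_
  have hj := Finset.ne_of_mem_erase j.2
  rw [upperCorner_of_ne_zero hj, lowerCorner_of_ne_zero hj]

end Boxes

theorem volume_dominated_region_eq_sum_boxes_general
    (p : ℕ) (zr : Fin (p+2) → ℝ)
    (N : Set (Fin (p+2) → ℝ)) (hN : N.Finite) (hbox : ∀ z ∈ N, InOpenBox zr z)
    (hgp : GenPos N)
    (zdef : (Fin (p+2) → ℝ) → Fin (p+2) → (Fin (p+2) → ℝ))
    (hdef : ∀ u ∈ UBSet zr N, ∀ j, zdef u j ∈ Nhat zr N ∧ zdef u j j = u j ∧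
            ∀ k, k ≠ j → zdef u j k < u k) :
    ∃ hU : (UBSet zr N).Finite,
      MeasureTheory.volume (DomRegion zr N) =
        ∑ u ∈ hU.toFinset, ENNReal.ofReal
          ((zr 0 - zdef u 0 0) *
            ∏ j ∈ (Finset.univ.erase (0 : Fin (p+2))).attach,
              (u j.1 - (Finset.Iio j.1).sup'
                ⟨0, Finset.mem_Iio.mpr (Fin.pos_of_ne_zero (Finset.ne_of_mem_erase j.2))⟩
                (fun k => zdef u k j.1))) := by
  have hU : (UBSet zr N).Finite := finite_ubSet hN hdef
  have hgen := ae_isGeneric (zr := zr) hN hU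
  refine ⟨hU, ?_⟩
  rw [measure_congr (domRegion_ae_eq_biUnion_ubBox hN hbox hgp hdef hU hgen),
    measure_biUnion_finset₀
      (fun u hu u' hu' hne => aedisjoint_ubBox hdef hgen (hU.mem_toFinset.1 hu)
        (hU.mem_toFinset.1 hu') hne)
      fun _ _ => measurableSet_Icc.nullMeasurableSet]
  exact Finset.sum_congr rfl fun u hu => volume_ubBox hdef (hU.mem_toFinset.1 hu)

/-- U(N) is finite, and the Lebesgue measure of the dominated region D(N)
equals the sum, over u ∈ U(N), of
(zr_1 − z^1(u)_1) · ∏_{j=2}^p (u_j − max_{k<j} z^k(u)_j). -/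
theorem volume_dominated_region_eq_sum_boxes
    (p : ℕ) (zr : Fin (p+2) → ℝ) (hzr : ∀ j, 0 < zr j)
    (N : Set (Fin (p+2) → ℝ)) (hN : N.Finite) (hbox : ∀ z ∈ N, InOpenBox zr z)
    (hstab : Stable N) (hgp : GenPos N)
    (zdef : (Fin (p+2) → ℝ) → Fin (p+2) → (Fin (p+2) → ℝ))
    (hdef : ∀ u ∈ UBSet zr N, ∀ j, zdef u j ∈ Nhat zr N ∧ zdef u j j = u j ∧
            ∀ k, k ≠ j → zdef u j k < u k) :
    ∃ hU : (UBSet zr N).Finite,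
      MeasureTheory.volume (DomRegion zr N) =
        ∑ u ∈ hU.toFinset, ENNReal.ofReal
          ((zr 0 - zdef u 0 0) *
            ∏ j ∈ (Finset.univ.erase (0 : Fin (p+2))).attach,
              (u j.1 - (Finset.Iio j.1).sup'
                ⟨0, Finset.mem_Iio.mpr (Fin.pos_of_ne_zero (Finset.ne_of_mem_erase j.2))⟩
                (fun k => zdef u k j.1))) :=
  volume_dominated_region_eq_sum_boxes_general p zr N hN hbox hgp zdef hdef
end

section
/- Let z̄ ∈ (0, z^r) and let N ⊆ (0, z^r) be finite with z̄ ∉ N, such that N ∪ {z̄} is a stable set in general position. Let u ∈ U(N) with z̄ < u (strictly in every coordinate), and let j ∈ {1,…,p}. Then (z̄_j, u_{−j}) — the vector obtained from u by replacing its j-th coordinate with z̄_j — belongs to U(N ∪ {z̄}) if and only if z̄_j ≥ z^k_j(u) for every k ≠ j, where z^k(u) is the unique k-th defining point of u. -/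
open scoped BigOperators

/-- Theorem 1 of the paper: for u ∈ U(N) with z̄ < u, the point
(z̄_j, u_{−j}) belongs to U(N ∪ {z̄}) iff z̄_j ≥ z^k(u)_j for every k ≠ j, where
z^k(u) (given here as zdef k) is the k-th defining point of u. -/
theorem incremental_update_mem_ubset_iff
    (p : ℕ) (zr : Fin (p+2) → ℝ) (hzr : ∀ j, 0 < zr j)
    (N : Set (Fin (p+2) → ℝ)) (hN : N.Finite) (hbox : ∀ z ∈ N, InOpenBox zr z)
    (zb : Fin (p+2) → ℝ) (hzb : InOpenBox zr zb) (hzbN : zb ∉ N)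
    (hstab : Stable (N ∪ {zb})) (hgp : GenPos (N ∪ {zb}))
    (u : Fin (p+2) → ℝ) (hu : u ∈ UBSet zr N) (hlt : SDom zb u)
    (zdef : Fin (p+2) → (Fin (p+2) → ℝ))
    (hdef : ∀ k, zdef k ∈ Nhat zr N ∧ zdef k k = u k ∧ ∀ i, i ≠ k → zdef k i < u i)
    (j : Fin (p+2)) :
    Function.update u j (zb j) ∈ UBSet zr (N ∪ {zb}) ↔
      ∀ k, k ≠ j → zdef k j ≤ zb j := by
  classical
  obtain ⟨hu0, huzr, hP1u, humax⟩ := hu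
  have hvj : Function.update u j (zb j) j = zb j := Function.update_self _ _ _
  have hvi : ∀ i, i ≠ j → Function.update u j (zb j) i = u i :=
    fun i hi => Function.update_of_ne hi _ _
  constructor
  · rintro ⟨hv0, hvzr, hP1v, hvmax⟩ k hkj
    by_contra hcon
    push_neg at hcon
    obtain ⟨hdm, hdk, hdl⟩ := hdef k
    have hzdN : zdef k ∈ N := by
      rcases hdm with h | ⟨m, hm⟩
      · exact h
      · by_cases hmj : m = j
        · subst hmj
          have h0 : zdef k k = 0 := by
            rw [← hm]; simp only [zhat, if_neg hkj]
          rw [hdk] at h0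
          have := hlt k; have := (hzb k).1; linarith
        · have h0 : zdef k j = 0 := by
            rw [← hm]; simp only [zhat, if_neg (fun h : j = m => hmj h.symm)]
          have := (hzb j).1; linarith
    have hukzr : u k < zr k := by
      have := (hbox _ hzdN k).2; rw [hdk] at this; exact this
    set F := hN.toFinset.filter
      (fun z => (∀ i, i ≠ k → z i < u i) ∧ z j < zb j) with hF
    set G := insert (zr k) (F.image (fun z => z k)) with hG
    have hGne : G.Nonempty := ⟨zr k, Finset.mem_insert_self _ _⟩
    set t := G.min' hGne with ht
    have htzr : t ≤ zr k := Finset.min'_le _ _ (Finset.mem_insert_self _ _)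
    have htF : ∀ z ∈ F, t ≤ z k := fun z hz =>
      Finset.min'_le _ _ (Finset.mem_insert_of_mem (Finset.mem_image_of_mem _ hz))
    have htu : u k < t := by
      have hmem : t ∈ G := G.min'_mem hGne
      rw [hG, Finset.mem_insert] at hmem
      rcases hmem with h | h
      · rw [h]; exact hukzr
      · obtain ⟨z, hzF, hzk⟩ := Finset.mem_image.mp h
        obtain ⟨hzN', ⟨hz1, hz2⟩⟩ := Finset.mem_filter.mp hzF
        have hzN : z ∈ N := hN.mem_toFinset.mp hzN'
        have hge : u k ≤ z k := by
          by_contra hlt2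
          push_neg at hlt2
          exact hP1u ⟨z, hzN, fun i => by
            by_cases hik : i = k
            · rw [hik]; exact hlt2
            · exact hz1 i hik⟩
        have hne : z k ≠ u k := by
          intro heq
          have hzd : z = zdef k := by
            by_contra hne2
            exact hgp z (Or.inl hzN) (zdef k) (Or.inl hzdN) hne2 k
              (by rw [heq, hdk])
          rw [hzd] at hz2; linarith
        rw [← hzk]
        exact lt_of_le_of_ne hge (Ne.symm hne)
    set u' := Function.update (Function.update u j (zb j)) k t with hu'
    have hu'k : u' k = t := Function.update_self _ _ _
    have hjk : j ≠ k := fun h => hkj h.symm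
    have hu'j : u' j = zb j := by
      rw [hu', Function.update_of_ne hjk, hvj]
    have hu'i : ∀ i, i ≠ j → i ≠ k → u' i = u i := fun i hij hik => by
      rw [hu', Function.update_of_ne hik, hvi i hij]
    refine hvmax u' ?_ ?_ ?_ ?_
    · intro i
      by_cases hik : i = k
      · subst hik; rw [hu'k]; have := hu0 i; simp only [Pi.zero_apply] at this ⊢; linarith
      · by_cases hij : i = j
        · subst hij; rw [hu'j]; simp only [Pi.zero_apply]; linarith [(hzb i).1]
        · rw [hu'i i hij hik]; exact hu0 i
    · intro i
      by_cases hik : i = k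
      · subst hik; rw [hu'k]; exact htzr
      · by_cases hij : i = j
        · subst hij; rw [hu'j]; linarith [(hzb i).2]
        · rw [hu'i i hij hik]; exact huzr i
    · constructor
      · intro i
        by_cases hik : i = k
        · subst hik; rw [hu'k, hvi i hkj]; linarith
        · rw [hu', Function.update_of_ne hik]
      · intro h
        have := congrFun h k
        rw [hu'k, hvi k hkj] at this
        linarith
    · rintro ⟨z, hz, hsd⟩
      rcases hz with hzN | hzb'
      · have hzF : z ∈ F := by
          rw [hF, Finset.mem_filter]
          refine ⟨hN.mem_toFinset.mpr hzN, fun i hik => ?_, ?_⟩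
          · by_cases hij : i = j
            · subst hij
              have := hsd i; rw [hu'j] at this
              linarith [hlt i]
            · have := hsd i; rwa [hu'i i hij hik] at this
          · have := hsd j; rwa [hu'j] at this
        have := htF z hzF
        have := hsd k; rw [hu'k] at this
        linarith
      · rw [Set.mem_singleton_iff] at hzb'
        subst hzb'
        have := hsd j; rw [hu'j] at this
        linarith
  · intro h
    refine ⟨?_, ?_, ?_, ?_⟩
    · intro i
      by_cases hij : i = j
      · subst hij; rw [hvj]; simp only [Pi.zero_apply]; linarith [(hzb i).1]
      · rw [hvi i hij]; exact hu0 i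
    · intro i
      by_cases hij : i = j
      · subst hij; rw [hvj]; linarith [(hzb i).2]
      · rw [hvi i hij]; exact huzr i
    · rintro ⟨z, hz, hsd⟩
      rcases hz with hzN | hzb'
      · refine hP1u ⟨z, hzN, fun i => ?_⟩
        by_cases hij : i = j
        · subst hij
          have := hsd i; rw [hvj] at this
          linarith [hlt i]
        · have := hsd i; rwa [hvi i hij] at this
      · rw [Set.mem_singleton_iff] at hzb'
        subst hzb'
        have := hsd j; rw [hvj] at this
        linarith
    · intro u' h0' hzr' hdom hP1'
      obtain ⟨hwd, hne⟩ := hdom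
      by_cases hA : ∃ i, i ≠ j ∧ u i < u' i
      · obtain ⟨i, hij, hui⟩ := hA
        by_cases hBj : zb j < u' j
        · exact hP1' ⟨zb, Or.inr rfl, fun m => by
            by_cases hmj : m = j
            · subst hmj; exact hBj
            · have h1 := hwd m; rw [hvi m hmj] at h1
              linarith [hlt m]⟩
        · obtain ⟨hdm, hdk, hdl⟩ := hdef i
          have hzdN : zdef i ∈ N := by
            rcases hdm with hh | ⟨m, hm⟩
            · exact hh
            · by_cases hmi : m = i
              · have hri : zdef i i = zr i := by
                  rw [← hm, hmi]; simp [zhat]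
                rw [hdk] at hri
                have := hzr' i
                linarith
              · have h0 : zdef i i = 0 := by
                  rw [← hm]; simp only [zhat, if_neg (fun hh : i = m => hmi hh.symm)]
                rw [hdk] at h0
                have := hlt i; have := (hzb i).1; linarith
          have hzdne : zdef i ≠ zb := by
            intro heq
            have := hlt i; rw [← hdk, heq] at this; linarith
          have hzdj : zdef i j < zb j := by
            have h1 := h i hij
            have h2 := hgp (zdef i) (Or.inl hzdN) zb (Or.inr rfl) hzdne j
            exact lt_of_le_of_ne h1 h2
          refine hP1' ⟨zdef i, Or.inl hzdN, fun m => ?_⟩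
          by_cases hmi : m = i
          · subst hmi; rw [hdk]; exact hui
          · by_cases hmj : m = j
            · subst hmj
              have h1 := hwd m; rw [hvj] at h1
              linarith
            · have h1 := hwd m; rw [hvi m hmj] at h1
              have := hdl m hmi
              linarith
      · push_neg at hA
        have heq : ∀ i, i ≠ j → u' i = u i := fun i hij =>
          le_antisymm (hA i hij) (by have := hwd i; rwa [hvi i hij] at this)
        have hju : zb j < u' j := by
          have h1 := hwd j; rw [hvj] at h1
          rcases lt_or_eq_of_le h1 with h2 | h2
          · exact h2
          · exfalso
            apply hne
            funext i
            by_cases hij : i = j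
            · subst hij; rw [hvj, ← h2]
            · rw [hvi i hij, heq i hij]
        exact hP1' ⟨zb, Or.inr rfl, fun m => by
          by_cases hmj : m = j
          · subst hmj; exact hju
          · rw [heq m hmj]; exact hlt m⟩
end

section
/- Let z̄ ∈ (0, z^r) and let N ⊆ (0, z^r) be finite with z̄ ∉ N, such that N ∪ {z̄} is a stable set in general position. Set A = {u ∈ U(N) : z̄ < u}. Then U(N ∪ {z̄}) = {(z̄_j, u_{−j}) : u ∈ A, j ∈ {1,…,p}, and z̄_j ≥ z^k_j(u) for all k ≠ j} ∪ (U(N) \ A), where z^k(u) denotes the unique k-th defining point of u ∈ U(N). -/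
open scoped BigOperators

/-- Characterization of the upper bound set for finite `M`: a point is in `U(M)` iff it
lies in `[0, zr]`, satisfies (P1), and for each coordinate `j` either hits `zr j` or
has a "defining point" in `M` at coordinate `j`. -/
theorem ubset_iff {n : ℕ} (zr : Fin n → ℝ) (M : Set (Fin n → ℝ)) (hM : M.Finite)
    (u : Fin n → ℝ) :
    u ∈ UBSet zr M ↔ WDom 0 u ∧ WDom u zr ∧ P1 M u ∧
      ∀ j, u j = zr j ∨ ∃ z ∈ M, z j = u j ∧ ∀ i, i ≠ j → z i < u i := by
  classical
  constructor
  · rintro ⟨h0, hr, hp1, hmax⟩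
    refine ⟨h0, hr, hp1, fun j => ?_⟩
    by_cases hj : u j = zr j
    · exact Or.inl hj
    · right
      by_contra hno
      push_neg at hno
      have hjlt : u j < zr j := lt_of_le_of_ne (hr j) hj
      set F : Finset ℝ := insert (zr j)
        ((hM.toFinset.filter (fun z => ∀ i, i ≠ j → z i < u i)).image (fun z => z j)) with hF
      have hne : F.Nonempty := ⟨zr j, Finset.mem_insert_self _ _⟩
      set t := F.min' hne with ht
      have hmemF : ∀ x ∈ F, u j < x := by
        intro x hx
        rcases Finset.mem_insert.mp hx with rfl | hx
        · exact hjlt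
        · obtain ⟨z, hz, rfl⟩ := Finset.mem_image.mp hx
          obtain ⟨hzM, hzi⟩ := Finset.mem_filter.mp hz
          rw [Set.Finite.mem_toFinset] at hzM
          rcases lt_trichotomy (z j) (u j) with h | h | h
          · exact absurd ⟨z, hzM, fun i => by
              rcases eq_or_ne i j with rfl | hij
              · exact h
              · exact hzi i hij⟩ hp1
          · obtain ⟨i, hij, hle⟩ := hno z hzM h
            exact absurd (hzi i hij) (not_lt.mpr hle)
          · exact h
      have hjt : u j < t := (Finset.lt_min'_iff F hne).mpr hmemF
      have htr : t ≤ zr j := Finset.min'_le _ _ (Finset.mem_insert_self _ _)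
      set u' := Function.update u j t with hu'
      have hu'j : u' j = t := Function.update_self _ _ _
      have hu'i : ∀ i, i ≠ j → u' i = u i := fun i hij => Function.update_of_ne hij _ _
      have h0' : WDom 0 u' := by
        intro i
        rcases eq_or_ne i j with rfl | hij
        · rw [hu'j]; exact le_trans (h0 i) (le_of_lt hjt)
        · rw [hu'i i hij]; exact h0 i
      have hr' : WDom u' zr := by
        intro i
        rcases eq_or_ne i j with rfl | hij
        · rw [hu'j]; exact htr
        · rw [hu'i i hij]; exact hr i
      have hdom : Dom u u' := by
        refine ⟨fun i => ?_, fun h => ?_⟩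
        · rcases eq_or_ne i j with rfl | hij
          · rw [hu'j]; exact le_of_lt hjt
          · rw [hu'i i hij]
        · have := congrFun h j
          rw [hu'j] at this
          exact absurd this (ne_of_lt hjt)
      have hnp := hmax u' h0' hr' hdom
      simp only [P1, not_not] at hnp
      obtain ⟨z, hzM, hsd⟩ := hnp
      have hzfil : z ∈ hM.toFinset.filter (fun z => ∀ i, i ≠ j → z i < u i) := by
        rw [Finset.mem_filter, Set.Finite.mem_toFinset]
        exact ⟨hzM, fun i hij => by have := hsd i; rwa [hu'i i hij] at this⟩
      have h1 : t ≤ z j := Finset.min'_le _ _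
        (Finset.mem_insert_of_mem (Finset.mem_image_of_mem _ hzfil))
      have h2 := hsd j
      rw [hu'j] at h2
      exact absurd h2 (not_lt.mpr h1)
  · rintro ⟨h0, hr, hp1, hch⟩
    refine ⟨h0, hr, hp1, fun u' h0' hr' hdom hp1' => ?_⟩
    have hex : ∃ j, u j < u' j := by
      by_contra hc
      push_neg at hc
      exact hdom.2 (funext fun j => le_antisymm (hdom.1 j) (hc j))
    obtain ⟨j, hj⟩ := hex
    rcases hch j with h1 | ⟨z, hzM, hzj, hzi⟩
    · exact absurd (lt_of_lt_of_le hj (hr' j)) (by rw [h1]; exact lt_irrefl _)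
    · exact hp1' ⟨z, hzM, fun i => by
        rcases eq_or_ne i j with rfl | hij
        · rw [hzj]; exact hj
        · exact lt_of_lt_of_le (hzi i hij) (hdom.1 i)⟩

/-- A defining point of `u` at coordinate `k` is either a point of `N`, or `u` hits the
reference level at `k` and the defining point is the `k`-th dummy point. -/
theorem defpt_cases {n : ℕ} (zr : Fin n → ℝ) (N : Set (Fin n → ℝ)) (u w : Fin n → ℝ)
    (k : Fin n) (hr : WDom u zr) (hw : w ∈ Nhat zr N) (hkk : w k = u k)
    (hki : ∀ i, i ≠ k → w i < u i) :
    w ∈ N ∨ (u k = zr k ∧ ∀ i, i ≠ k → w i = 0) := by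
  rcases hw with hw | ⟨m, rfl⟩
  · exact Or.inl hw
  · right
    rcases eq_or_ne m k with rfl | hmk
    · constructor
      · rw [← hkk]; simp [zhat]
      · intro i hik; simp [zhat, hik]
    · exfalso
      have h1 : zhat zr m m = zr m := by simp [zhat]
      have h2 := hki m hmk
      rw [h1] at h2
      exact absurd h2 (not_lt.mpr (hr m))

/-- the incremental update formula for the upper bound set,
U(N ∪ {z̄}) = {(z̄_j, u_{−j}) : u ∈ A, z̄_j ≥ z^k_j(u) ∀ k ≠ j} ∪ (U(N) \ A),
where A = {u ∈ U(N) : z̄ < u}. -/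
theorem incremental_ubset_formula
    (p : ℕ) (zr : Fin (p+2) → ℝ) (hzr : ∀ j, 0 < zr j)
    (N : Set (Fin (p+2) → ℝ)) (hN : N.Finite) (hbox : ∀ z ∈ N, InOpenBox zr z)
    (zb : Fin (p+2) → ℝ) (hzb : InOpenBox zr zb) (hzbN : zb ∉ N)
    (hstab : Stable (N ∪ {zb})) (hgp : GenPos (N ∪ {zb}))
    (zdef : (Fin (p+2) → ℝ) → Fin (p+2) → (Fin (p+2) → ℝ))
    (hdef : ∀ u ∈ UBSet zr N, ∀ k, zdef u k ∈ Nhat zr N ∧ zdef u k k = u k ∧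
            ∀ i, i ≠ k → zdef u k i < u i) :
    UBSet zr (N ∪ {zb}) =
      {v | ∃ u ∈ UBSet zr N, SDom zb u ∧ ∃ j : Fin (p+2),
            (∀ k, k ≠ j → zdef u k j ≤ zb j) ∧ v = Function.update u j (zb j)} ∪
      {u ∈ UBSet zr N | ¬ SDom zb u} := by
  classical
  have hMfin : (N ∪ {zb} : Set (Fin (p+2) → ℝ)).Finite := hN.union (Set.finite_singleton zb)
  have hzbM : zb ∈ N ∪ ({zb} : Set (Fin (p+2) → ℝ)) := Set.mem_union_right _ rfl
  ext v
  simp only [Set.mem_union, Set.mem_setOf_eq]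
  constructor
  · intro hv
    obtain ⟨h0, hr, hp1, hch⟩ := (ubset_iff zr (N ∪ {zb}) hMfin v).mp hv
    by_cases hcase : ∃ j, zb j = v j ∧ ∀ i, i ≠ j → zb i < v i
    · left
      obtain ⟨j, hbj, hbi⟩ := hcase
      have hSgt : ∀ z ∈ N, (∀ i, i ≠ j → z i < v i) → v j < z j := by
        intro z hzN hzi
        have hzzb : z ≠ zb := fun h => hzbN (h ▸ hzN)
        have hnej : z j ≠ zb j := hgp z (Or.inl hzN) zb (Or.inr rfl) hzzb j
        rcases lt_trichotomy (z j) (v j) with h | h | h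
        · exact absurd ⟨z, Or.inl hzN, fun i => by
            rcases eq_or_ne i j with rfl | hij
            · exact h
            · exact hzi i hij⟩ hp1
        · exact absurd (h.trans hbj.symm) hnej
        · exact h
      set F : Finset ℝ := insert (zr j)
        ((hN.toFinset.filter (fun z => ∀ i, i ≠ j → z i < v i)).image (fun z => z j)) with hF
      have hneF : F.Nonempty := ⟨zr j, Finset.mem_insert_self _ _⟩
      set t := F.min' hneF with ht
      have hmemF : ∀ x ∈ F, v j < x := by
        intro x hx
        rcases Finset.mem_insert.mp hx with rfl | hx
        · rw [← hbj]; exact (hzb j).2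
        · obtain ⟨z, hz, rfl⟩ := Finset.mem_image.mp hx
          obtain ⟨hzN', hzi⟩ := Finset.mem_filter.mp hz
          rw [Set.Finite.mem_toFinset] at hzN'
          exact hSgt z hzN' hzi
      have hjt : v j < t := (Finset.lt_min'_iff F hneF).mpr hmemF
      have htzb : zb j < t := by rw [hbj]; exact hjt
      have htr : t ≤ zr j := Finset.min'_le _ _ (Finset.mem_insert_self _ _)
      set u := Function.update v j t with hu
      have huj : u j = t := Function.update_self _ _ _
      have hui : ∀ i, i ≠ j → u i = v i := fun i hij => Function.update_of_ne hij _ _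
      have h0u : WDom 0 u := by
        intro i
        rcases eq_or_ne i j with rfl | hij
        · rw [huj]; exact le_trans (h0 i) (le_of_lt hjt)
        · rw [hui i hij]; exact h0 i
      have hru : WDom u zr := by
        intro i
        rcases eq_or_ne i j with rfl | hij
        · rw [huj]; exact htr
        · rw [hui i hij]; exact hr i
      have hp1u : P1 N u := by
        rintro ⟨z, hzN, hsd⟩
        have hzfil : z ∈ hN.toFinset.filter (fun z => ∀ i, i ≠ j → z i < v i) := by
          rw [Finset.mem_filter, Set.Finite.mem_toFinset]
          exact ⟨hzN, fun i hij => by have := hsd i; rwa [hui i hij] at this⟩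
        have h1 : t ≤ z j := Finset.min'_le _ _
          (Finset.mem_insert_of_mem (Finset.mem_image_of_mem _ hzfil))
        have h2 := hsd j
        rw [huj] at h2
        exact absurd h2 (not_lt.mpr h1)
      have hchu : ∀ k, u k = zr k ∨ ∃ z ∈ N, z k = u k ∧ ∀ i, i ≠ k → z i < u i := by
        intro k
        rcases eq_or_ne k j with rfl | hkj
        · have hmem := F.min'_mem hneF
          rw [← ht] at hmem
          rcases Finset.mem_insert.mp hmem with h | h
          · left; rw [huj]; exact h
          · obtain ⟨z, hz, hzj⟩ := Finset.mem_image.mp h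
            obtain ⟨hzN', hzi⟩ := Finset.mem_filter.mp hz
            rw [Set.Finite.mem_toFinset] at hzN'
            right
            refine ⟨z, hzN', by rw [huj, hzj], fun i hik => ?_⟩
            rw [hui i hik]
            exact hzi i hik
        · rcases hch k with h1 | ⟨z, hzM, hzk, hzi⟩
          · left; rw [hui k hkj]; exact h1
          · rcases hzM with hzN' | hz1
            · right
              refine ⟨z, hzN', by rw [hui k hkj]; exact hzk, fun i hik => ?_⟩
              rcases eq_or_ne i j with rfl | hij
              · rw [huj]; exact lt_trans (hzi i (Ne.symm hkj)) hjt
              · rw [hui i hij]; exact hzi i hik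
            · exfalso
              rw [Set.mem_singleton_iff] at hz1
              subst hz1
              exact absurd hzk (ne_of_lt (hbi k hkj))
      have huU : u ∈ UBSet zr N := (ubset_iff zr N hN u).mpr ⟨h0u, hru, hp1u, hchu⟩
      have hsdu : SDom zb u := by
        intro i
        rcases eq_or_ne i j with rfl | hij
        · rw [huj]; exact htzb
        · rw [hui i hij]; exact hbi i hij
      have hcond : ∀ k, k ≠ j → zdef u k j ≤ zb j := by
        intro k hkj
        obtain ⟨hmem, hkk, hki⟩ := hdef u huU k
        rcases defpt_cases zr N u (zdef u k) k hru hmem hkk hki with hzN' | ⟨_, hzero⟩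
        · have hukvk : u k = v k := hui k hkj
          have hvklt : v k < zr k := by
            have h3 := (hbox _ hzN' k).2
            rwa [hkk, hukvk] at h3
          rcases hch k with h1 | ⟨z', hz'M, hz'k, hz'i⟩
          · exact absurd h1 (ne_of_lt hvklt)
          · have hz'N : z' ∈ N := by
              rcases hz'M with h | h
              · exact h
              · exfalso
                rw [Set.mem_singleton_iff] at h
                subst h
                exact absurd hz'k (ne_of_lt (hbi k hkj))
            have heq : zdef u k = z' := by
              by_contra hne'
              exact hgp _ (Or.inl hzN') _ (Or.inl hz'N) hne' k
                (by rw [hkk, hukvk, hz'k])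
            have h4 : zdef u k j < v j := by rw [heq]; exact hz'i j (Ne.symm hkj)
            rw [← hbj] at h4
            exact le_of_lt h4
        · rw [hzero j (Ne.symm hkj)]; exact le_of_lt (hzb j).1
      have hveq : v = Function.update u j (zb j) := by
        funext i
        rcases eq_or_ne i j with rfl | hij
        · rw [Function.update_self]; exact hbj.symm
        · rw [Function.update_of_ne hij, hui i hij]
      exact ⟨u, huU, hsdu, j, hcond, hveq⟩
    · right
      push_neg at hcase
      have hns : ¬ SDom zb v := fun hs => hp1 ⟨zb, hzbM, hs⟩
      refine ⟨(ubset_iff zr N hN v).mpr ⟨h0, hr, ?_, fun j => ?_⟩, hns⟩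
      · rintro ⟨z, hzN, hs⟩
        exact hp1 ⟨z, Or.inl hzN, hs⟩
      · rcases hch j with h1 | ⟨z, hzM, hzj, hzi⟩
        · exact Or.inl h1
        · rcases hzM with hzN' | hz1
          · exact Or.inr ⟨z, hzN', hzj, hzi⟩
          · rw [Set.mem_singleton_iff] at hz1
            subst hz1
            obtain ⟨i, hij, hle⟩ := hcase j hzj
            exact absurd (hzi i hij) (not_lt.mpr hle)
  · rintro (⟨u, huU, hsd, j, hcond, rfl⟩ | ⟨huU, hns⟩)
    · obtain ⟨h0, hr, hp1, hch⟩ := (ubset_iff zr N hN u).mp huU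
      set v := Function.update u j (zb j) with hv
      have hvj : v j = zb j := Function.update_self _ _ _
      have hvi : ∀ i, i ≠ j → v i = u i := fun i hij => Function.update_of_ne hij _ _
      apply (ubset_iff zr (N ∪ {zb}) hMfin v).mpr
      refine ⟨?_, ?_, ?_, ?_⟩
      · intro i
        rcases eq_or_ne i j with rfl | hij
        · rw [hvj]; simpa using (hzb i).1.le
        · rw [hvi i hij]; exact h0 i
      · intro i
        rcases eq_or_ne i j with rfl | hij
        · rw [hvj]; exact (hzb i).2.le
        · rw [hvi i hij]; exact hr i
      · rintro ⟨z, hzM, hs⟩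
        rcases hzM with hzN | hz1
        · apply hp1
          refine ⟨z, hzN, fun i => ?_⟩
          rcases eq_or_ne i j with rfl | hij
          · have h3 := hs i; rw [hvj] at h3; exact lt_trans h3 (hsd i)
          · have h3 := hs i; rwa [hvi i hij] at h3
        · rw [Set.mem_singleton_iff] at hz1
          subst hz1
          have h3 := hs j
          rw [hvj] at h3
          exact lt_irrefl _ h3
      · intro k
        rcases eq_or_ne k j with rfl | hkj
        · right
          exact ⟨zb, hzbM, hvj.symm, fun i hij => by rw [hvi i hij]; exact hsd i⟩
        · obtain ⟨hmem, hkk, hki⟩ := hdef u huU k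
          rcases defpt_cases zr N u (zdef u k) k hr hmem hkk hki with hzN' | ⟨hukr, _⟩
          · right
            refine ⟨zdef u k, Or.inl hzN', by rw [hkk, hvi k hkj], fun i hik => ?_⟩
            rcases eq_or_ne i j with rfl | hij
            · have hle := hcond k hkj
              have hne' : zdef u k i ≠ zb i := hgp _ (Or.inl hzN') zb (Or.inr rfl)
                (fun h => hzbN (h ▸ hzN')) i
              rw [hvj]
              exact lt_of_le_of_ne hle hne'
            · rw [hvi i hij]; exact hki i hik
          · left; rw [hvi k hkj]; exact hukr
    · obtain ⟨h0, hr, hp1, hch⟩ := (ubset_iff zr N hN v).mp huU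
      apply (ubset_iff zr (N ∪ {zb}) hMfin v).mpr
      refine ⟨h0, hr, ?_, fun j => ?_⟩
      · rintro ⟨z, hzM, hs⟩
        rcases hzM with hzN | hz1
        · exact hp1 ⟨z, hzN, hs⟩
        · rw [Set.mem_singleton_iff] at hz1
          subst hz1
          exact hns hs
      · rcases hch j with h1 | ⟨z, hzN, hzj, hzi⟩
        · exact Or.inl h1
        · exact Or.inr ⟨z, Or.inl hzN, hzj, hzi⟩
end

section
/- Let z̄ ∈ (0, z^r) and let N ⊆ (0, z^r) be finite with z̄ ∉ N, such that N ∪ {z̄} is a stable set in general position, and assume z̄_p > z_p for every z ∈ N. Then every u ∈ U(N) with z̄ < u satisfies u_p = z^r_p. -/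
open scoped BigOperators

/-- if z̄ has the largest p-th coordinate among N ∪ {z̄}, then every
u ∈ U(N) with z̄ < u satisfies u_p = zr_p. -/
theorem last_coord_eq_ref_of_strictly_dominated
    (p : ℕ) (zr : Fin (p+2) → ℝ) (hzr : ∀ j, 0 < zr j)
    (N : Set (Fin (p+2) → ℝ)) (hN : N.Finite) (hbox : ∀ z ∈ N, InOpenBox zr z)
    (zb : Fin (p+2) → ℝ) (hzb : InOpenBox zr zb) (hzbN : zb ∉ N)
    (hstab : Stable (N ∪ {zb})) (hgp : GenPos (N ∪ {zb}))
    (hlast : ∀ z ∈ N, z (Fin.last (p+1)) < zb (Fin.last (p+1)))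
    (u : Fin (p+2) → ℝ) (hu : u ∈ UBSet zr N) (hlt : SDom zb u) :
    u (Fin.last (p+1)) = zr (Fin.last (p+1)) := by
  obtain ⟨hu0, huzr, huP1, humax⟩ := hu
  by_contra hne
  have hlt' : u (Fin.last (p+1)) < zr (Fin.last (p+1)) :=
    lt_of_le_of_ne (huzr _) hne
  set L := Fin.last (p+1)
  set u' : Fin (p+2) → ℝ := Function.update u L (zr L) with hu'
  have hu'val : ∀ j, u' j = if j = L then zr L else u j := by
    intro j; by_cases h : j = L <;> simp [hu', Function.update, h]
  have h0 : WDom 0 u' := by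
    intro j; rw [hu'val]
    by_cases h : j = L <;> simp [h]
    · exact (hzr L).le
    · exact hu0 j
  have hzr' : WDom u' zr := by
    intro j; rw [hu'val]
    by_cases h : j = L <;> simp [h]
    · exact huzr j
  have hdom : Dom u u' := by
    constructor
    · intro j; rw [hu'val]
      by_cases h : j = L <;> simp [h]
      exact hlt'.le
    · intro h
      have := congrFun h L
      rw [hu'val] at this; simp at this
      exact absurd this (ne_of_lt hlt')
  have := humax u' h0 hzr' hdom
  simp only [P1, not_not] at this
  obtain ⟨z, hzN, hzS⟩ := this
  apply huP1
  refine ⟨z, hzN, fun j => ?_⟩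
  by_cases h : j = L
  · subst h
    exact lt_trans (hlast z hzN) (hlt L)
  · have := hzS j
    rw [hu'val] at this; simpa [h] using this
end

section
/- Let z̄ ∈ (0, z^r) and let N ⊆ (0, z^r) be finite with z̄ ∉ N, such that N ∪ {z̄} is a stable set in general position, and assume z̄_p > z_p for every z ∈ N. Then for every u ∈ U(N) with z̄ < u, the point (z̄_p, u_{−p}) — obtained from u by replacing its p-th coordinate with z̄_p — belongs to U(N ∪ {z̄}). -/
open scoped BigOperators

/-- if z̄ has the largest p-th coordinate among N ∪ {z̄}, then for every
u ∈ U(N) with z̄ < u, the point (z̄_p, u_{−p}) is a local upper bound of N ∪ {z̄}. -/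
theorem update_last_mem_incremental_ubset
    (p : ℕ) (zr : Fin (p+2) → ℝ) (hzr : ∀ j, 0 < zr j)
    (N : Set (Fin (p+2) → ℝ)) (hN : N.Finite) (hbox : ∀ z ∈ N, InOpenBox zr z)
    (zb : Fin (p+2) → ℝ) (hzb : InOpenBox zr zb) (hzbN : zb ∉ N)
    (hstab : Stable (N ∪ {zb})) (hgp : GenPos (N ∪ {zb}))
    (hlast : ∀ z ∈ N, z (Fin.last (p+1)) < zb (Fin.last (p+1)))
    (u : Fin (p+2) → ℝ) (hu : u ∈ UBSet zr N) (hlt : SDom zb u) :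
    Function.update u (Fin.last (p+1)) (zb (Fin.last (p+1))) ∈ UBSet zr (N ∪ {zb}) := by
  obtain ⟨hu0, huzr, huP1, humax⟩ := hu
  set L := Fin.last (p+1) with hL
  set v := Function.update u L (zb L) with hv
  have hvapp : ∀ j, v j = if j = L then zb L else u j := by
    intro j; simp [hv, Function.update_apply]
  refine ⟨?_, ?_, ?_, ?_⟩
  · intro j
    rw [hvapp j]
    by_cases hj : j = L
    · simp [hj]; exact le_of_lt (hzb L).1
    · simp [hj]; exact hu0 j
  · intro j
    rw [hvapp j]
    by_cases hj : j = L
    · simp [hj]; exact le_of_lt (hzb L).2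
    · simp [hj]; exact huzr j
  · rintro ⟨z, hz, hs⟩
    rcases hz with hz | hz
    · apply huP1
      refine ⟨z, hz, fun j => ?_⟩
      by_cases hj : j = L
      · subst hj; exact lt_trans (hlast z hz) (hlt L)
      · have := hs j; rwa [hvapp j, if_neg hj] at this
    · rcases hz with rfl
      have := hs L
      rw [hvapp L, if_pos rfl] at this
      exact lt_irrefl _ this
  · intro u' h0' hzr' hdom hP1'
    obtain ⟨hwd, hne⟩ := hdom
    by_cases hcase : v L < u' L
    · refine hP1' ⟨zb, Or.inr rfl, fun j => ?_⟩
      by_cases hj : j = L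
      · subst hj
        have := hcase; rwa [hvapp L, if_pos rfl] at this
      · calc zb j < u j := hlt j
          _ = v j := by rw [hvapp j, if_neg hj]
          _ ≤ u' j := hwd j
    · have hLe : u' L = zb L := by
        have h1 : v L ≤ u' L := hwd L
        have h2 : v L = zb L := by rw [hvapp L, if_pos rfl]
        have := le_antisymm (not_lt.mp hcase) h1
        exact this.trans h2
      obtain ⟨k, hk⟩ : ∃ k, v k ≠ u' k := Function.ne_iff.mp hne
      have hkL : k ≠ L := by
        intro h; subst h
        exact hk (by rw [hvapp L, if_pos rfl, hLe])
      have hklt : u k < u' k := by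
        have := lt_of_le_of_ne (hwd k) hk
        rwa [hvapp k, if_neg hkL] at this
      set u'' := Function.update u' L (u L) with hu''
      have hu''app : ∀ j, u'' j = if j = L then u L else u' j := by
        intro j; simp [hu'', Function.update_apply]
      have hmax := humax u'' ?_ ?_ ?_
      · rw [P1, not_not] at hmax
        obtain ⟨z, hz, hs⟩ := hmax
        refine hP1' ⟨z, Or.inl hz, fun j => ?_⟩
        by_cases hj : j = L
        · subst hj; rw [hLe]; exact hlast z hz
        · have := hs j; rwa [hu''app j, if_neg hj] at this
      · intro j; rw [hu''app j]
        by_cases hj : j = L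
        · simp [hj]; exact hu0 L
        · simp [hj]; exact h0' j
      · intro j; rw [hu''app j]
        by_cases hj : j = L
        · simp [hj]; exact huzr L
        · simp [hj]; exact hzr' j
      · constructor
        · intro j; rw [hu''app j]
          by_cases hj : j = L
          · simp [hj]
          · simp [hj]
            calc u j = v j := by rw [hvapp j, if_neg hj]
              _ ≤ u' j := hwd j
        · intro h
          have : u k = u'' k := by rw [h]
          rw [hu''app k, if_neg hkL] at this
          exact absurd this (ne_of_lt hklt)
end

section
/- Let N ⊆ ℝ^p be finite and let z̄ ∈ ℝ^p with z̄ ≦ z^r. Then, writing λ for p-dimensional Lebesgue measure and N' = {pmax(z̄, z) : z ∈ N}: λ(D(N ∪ {z̄})) + λ(D(N')) = λ(D(N)) + ∏_{j=1}^p (z^r_j − z̄_j). In particular, the exclusive hypervolume λ(D(N ∪ {z̄})) − λ(D(N)) equals λ(D({z̄})) − λ(D(N')). -/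
open scoped BigOperators

section Aux
open Set MeasureTheory

lemma domRegion_singleton {n : ℕ} (zr zb : Fin n → ℝ) :
    DomRegion zr {zb} = Set.Icc zb zr := by
  ext x
  simp [DomRegion, WDom, Set.mem_Icc, Pi.le_def]

lemma domRegion_biUnion {n : ℕ} (zr : Fin n → ℝ) (N : Set (Fin n → ℝ)) :
    DomRegion zr N = ⋃ z ∈ N, Set.Icc z zr := by
  ext x
  simp only [DomRegion, Set.mem_iUnion, Set.mem_setOf_eq, Set.mem_Icc, Pi.le_def, WDom]
  tauto

lemma domRegion_union {n : ℕ} (zr zb : Fin n → ℝ) (N : Set (Fin n → ℝ)) :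
    DomRegion zr (N ∪ {zb}) = DomRegion zr N ∪ DomRegion zr {zb} := by
  ext x
  simp only [DomRegion, Set.mem_union, Set.mem_setOf_eq, Set.mem_singleton_iff]
  constructor
  · rintro ⟨z, hz | hz, h⟩
    · exact Or.inl ⟨z, hz, h⟩
    · exact Or.inr ⟨z, hz, h⟩
  · rintro (⟨z, hz, h⟩ | ⟨z, hz, h⟩)
    · exact ⟨z, Or.inl hz, h⟩
    · exact ⟨z, Or.inr hz, h⟩

lemma domRegion_inter {n : ℕ} (zr zb : Fin n → ℝ) (N : Set (Fin n → ℝ)) :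
    DomRegion zr N ∩ DomRegion zr {zb} =
      DomRegion zr ((fun z => fun j => max (zb j) (z j)) '' N) := by
  ext x
  simp only [DomRegion, Set.mem_inter_iff, Set.mem_setOf_eq, Set.mem_singleton_iff,
    Set.mem_image]
  constructor
  · rintro ⟨⟨z, hz, hzx, hxr⟩, w, rfl, hwx, -⟩
    refine ⟨_, ⟨z, hz, rfl⟩, fun j => max_le (hwx j) (hzx j), hxr⟩
  · rintro ⟨-, ⟨z, hz, rfl⟩, hzx, hxr⟩
    exact ⟨⟨z, hz, fun j => le_trans (le_max_right _ _) (hzx j), hxr⟩,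
      zb, rfl, fun j => le_trans (le_max_left _ _) (hzx j), hxr⟩

lemma domRegion_measurable {n : ℕ} (zr : Fin n → ℝ) (N : Set (Fin n → ℝ))
    (hN : N.Finite) : MeasurableSet (DomRegion zr N) := by
  rw [domRegion_biUnion]
  exact hN.measurableSet_biUnion (fun z _ => measurableSet_Icc)

lemma domRegion_volume_lt_top {n : ℕ} (zr : Fin n → ℝ) (N : Set (Fin n → ℝ))
    (hN : N.Finite) : volume (DomRegion zr N) < ⊤ := by
  rw [domRegion_biUnion]
  refine (measure_biUnion_lt_top hN fun z _ => ?_)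
  rw [Real.volume_Icc_pi]
  exact ENNReal.prod_lt_top (fun j _ => ENNReal.ofReal_lt_top)

end Aux

/-- λ(D(N ∪ {z̄})) + λ(D(N')) = λ(D(N)) + ∏_j (zr_j − z̄_j), with
N' = {pmax(z̄, z) : z ∈ N}; in particular, the exclusive hypervolume
λ(D(N ∪ {z̄})) − λ(D(N)) equals λ(D({z̄})) − λ(D(N')). -/
theorem exclusive_hypervolume_formula
    (p : ℕ) (hp : 1 ≤ p) (zr : Fin p → ℝ) (hzr : ∀ j, 0 < zr j)
    (N : Set (Fin p → ℝ)) (hN : N.Finite) (zb : Fin p → ℝ) (hzb : WDom zb zr) :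
    MeasureTheory.volume (DomRegion zr (N ∪ {zb})) +
        MeasureTheory.volume (DomRegion zr ((fun z => fun j => max (zb j) (z j)) '' N)) =
      MeasureTheory.volume (DomRegion zr N) + ENNReal.ofReal (∏ j, (zr j - zb j)) ∧
    MeasureTheory.volume (DomRegion zr (N ∪ {zb})) -
        MeasureTheory.volume (DomRegion zr N) =
      MeasureTheory.volume (DomRegion zr {zb}) -
        MeasureTheory.volume (DomRegion zr ((fun z => fun j => max (zb j) (z j)) '' N)) := by
  have hmeas := domRegion_measurable zr {zb} (Set.finite_singleton zb)
  have key : MeasureTheory.volume (DomRegion zr (N ∪ {zb})) +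
      MeasureTheory.volume (DomRegion zr ((fun z => fun j => max (zb j) (z j)) '' N)) =
      MeasureTheory.volume (DomRegion zr N) + ENNReal.ofReal (∏ j, (zr j - zb j)) := by
    rw [domRegion_union, ← domRegion_inter]
    rw [MeasureTheory.measure_union_add_inter _ hmeas, domRegion_singleton, Real.volume_Icc_pi,
      ENNReal.ofReal_prod_of_nonneg (fun j _ => sub_nonneg.2 (hzb j))]
  refine ⟨key, ?_⟩
  have hbox : MeasureTheory.volume (DomRegion zr {zb}) = ENNReal.ofReal (∏ j, (zr j - zb j)) := by
    rw [domRegion_singleton, Real.volume_Icc_pi,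
      ENNReal.ofReal_prod_of_nonneg (fun j _ => sub_nonneg.2 (hzb j))]
  have hb' : MeasureTheory.volume (DomRegion zr ((fun z => fun j => max (zb j) (z j)) '' N)) ≤
      MeasureTheory.volume (DomRegion zr {zb}) := by
    rw [← domRegion_inter]
    exact MeasureTheory.measure_mono Set.inter_subset_right
  rw [hbox]
  -- a - c = d - b from a + b = c + d, with c ≤ a, b ≤ d, finiteness
  set a := MeasureTheory.volume (DomRegion zr (N ∪ {zb}))
  set b := MeasureTheory.volume (DomRegion zr ((fun z => fun j => max (zb j) (z j)) '' N))
  set c := MeasureTheory.volume (DomRegion zr N)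
  set d := ENNReal.ofReal (∏ j, (zr j - zb j))
  have hc : c ≤ a := by
    apply MeasureTheory.measure_mono
    rw [domRegion_union]; exact Set.subset_union_left
  have hb : b ≤ d := hbox ▸ hb'
  have hcfin : c ≠ ⊤ := (domRegion_volume_lt_top zr N hN).ne
  have hbfin : b ≠ ⊤ := (hb.trans_lt ENNReal.ofReal_lt_top).ne
  have h1 : (a - c) + (c + b) = (d - b) + (c + b) := by
    rw [← add_assoc, tsub_add_cancel_of_le hc, key, add_comm c b, ← add_assoc,
      tsub_add_cancel_of_le hb, add_comm]
  exact WithTop.add_right_cancel (ENNReal.add_ne_top.2 ⟨hcfin, hbfin⟩) h1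
end

section
/- Let c₁, c₂, c₃ ≥ 0 and let t : ℕ × ℕ → ℝ be a nonnegative function satisfying: t(n, 3) ≤ c₃·n² for all n ≥ 1; t(0, q) ≤ c₁ for all q ≥ 3; and t(n+1, q) ≤ t(n, q) + c₁ + c₂·n² + t(n, q−1) for all q ≥ 4 and all n ≥ 0. Then for every q ≥ 3 there exists a constant C such that t(n, q) ≤ C·n^{q−1} for all n ≥ 1. -/
/-- with a quadratic base case in dimension 3, the WFG recurrence yields
the improved bound t(n, q) = O(n^(q-1)) for every q ≥ 3. -/
theorem wfg_recurrence_improved_upper_bound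
    (c₁ c₂ c₃ : ℝ) (hc₁ : 0 ≤ c₁) (hc₂ : 0 ≤ c₂) (hc₃ : 0 ≤ c₃)
    (t : ℕ → ℕ → ℝ) (htnn : ∀ n q, 0 ≤ t n q)
    (hbase : ∀ n : ℕ, 1 ≤ n → t n 3 ≤ c₃ * (n : ℝ) ^ 2)
    (hzero : ∀ q : ℕ, 3 ≤ q → t 0 q ≤ c₁)
    (hrec : ∀ q : ℕ, 4 ≤ q → ∀ n : ℕ,
      t (n + 1) q ≤ t n q + c₁ + c₂ * (n : ℝ) ^ 2 + t n (q - 1)) :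
    ∀ q : ℕ, 3 ≤ q → ∃ C : ℝ, ∀ n : ℕ, 1 ≤ n → t n q ≤ C * (n : ℝ) ^ (q - 1) := by
  suffices h : ∀ q : ℕ, 3 ≤ q → ∃ C : ℝ, 0 ≤ C ∧
      ∀ n : ℕ, 1 ≤ n → t n q ≤ C * (n : ℝ) ^ (q - 1) by
    intro q hq
    obtain ⟨C, _, hC⟩ := h q hq
    exact ⟨C, hC⟩
  intro q hq
  induction q, hq using Nat.le_induction with
  | base =>
    exact ⟨c₃, hc₃, fun n hn => by simpa using hbase n hn⟩
  | succ q hq ih =>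
    obtain ⟨C, hC0, hC⟩ := ih
    set D : ℝ := 2 * c₁ + c₂ + C with hD
    have hD0 : 0 ≤ D := by simp only [hD]; linarith
    have htq : ∀ n : ℕ, t n q ≤ c₁ + C * (n : ℝ) ^ (q - 1) := by
      intro n
      rcases Nat.eq_zero_or_pos n with rfl | hn
      · have : ((0:ℕ):ℝ) ^ (q-1) = 0 := by
          rw [Nat.cast_zero]; exact zero_pow (by omega)
        rw [this]; simpa using hzero q hq
      · have h1 := hC n hn
        have : 0 ≤ C * (n : ℝ) ^ (q-1) := by positivity
        linarith
    have key : ∀ n : ℕ, t n (q+1) ≤ c₁ + D * (n : ℝ) ^ q := by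
      intro n
      induction n with
      | zero =>
        have : ((0:ℕ):ℝ) ^ q = 0 := by
          rw [Nat.cast_zero]; exact zero_pow (by omega)
        rw [this]; simpa using hzero (q+1) (by omega)
      | succ n ihn =>
        have hrec' := hrec (q+1) (by omega) n
        rw [Nat.add_sub_cancel] at hrec'
        have hx0 : (0:ℝ) ≤ (n:ℝ) := Nat.cast_nonneg n
        have htqn := htq n
        rcases Nat.eq_zero_or_pos n with rfl | hn
        · have e1 : (((0:ℕ)+1 : ℕ):ℝ) ^ q = 1 := by norm_num
          have e2 : ((0:ℕ):ℝ) ^ q = 0 := by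
            rw [Nat.cast_zero]; exact zero_pow (by omega)
          have e3 : ((0:ℕ):ℝ) ^ 2 = 0 := by rw [Nat.cast_zero]; exact zero_pow (by omega)
          have e4 : ((0:ℕ):ℝ) ^ (q-1) = 0 := by
            rw [Nat.cast_zero]; exact zero_pow (by omega)
          rw [e1]
          rw [e2] at ihn; rw [e3] at hrec'; rw [e4] at htqn
          simp only [hD]
          nlinarith
        · have hx1 : (1:ℝ) ≤ (n:ℝ) := by exact_mod_cast hn
          have e1 : ((n:ℝ)) ^ 2 ≤ (n:ℝ) ^ (q-1) :=
            pow_le_pow_right₀ hx1 (by omega)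
          have e2 : ((n:ℝ)) ^ (q-1) ≤ ((n:ℝ)+1) ^ (q-1) :=
            pow_le_pow_left₀ hx0 (by linarith) _
          have e3 : (1:ℝ) ≤ ((n:ℝ)+1) ^ (q-1) :=
            one_le_pow₀ (by linarith)
          have e4 : (n:ℝ) ^ q = (n:ℝ) ^ (q-1) * (n:ℝ) := by
            rw [← pow_succ]; congr 1; omega
          have e5 : ((n:ℝ)+1) ^ q = ((n:ℝ)+1) ^ (q-1) * ((n:ℝ)+1) := by
            rw [← pow_succ]; congr 1; omega
          have ht1 := hC n hn
          have hnn : (0:ℝ) ≤ (n:ℝ) ^ (q-1) := by positivity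
          have hcast : ((n+1 : ℕ):ℝ) = (n:ℝ) + 1 := by push_cast; ring
          rw [hcast, e5]
          rw [e4] at ihn
          have f1 : D * ((n:ℝ) ^ (q-1) * (n:ℝ)) ≤ D * (((n:ℝ)+1) ^ (q-1) * (n:ℝ)) :=
            mul_le_mul_of_nonneg_left (mul_le_mul_of_nonneg_right e2 hx0) hD0
          have f2 : c₂ * (n:ℝ) ^ 2 ≤ c₂ * (((n:ℝ)+1) ^ (q-1)) :=
            mul_le_mul_of_nonneg_left (e1.trans e2) hc₂
          have f3 : C * (n:ℝ) ^ (q-1) ≤ C * (((n:ℝ)+1) ^ (q-1)) :=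
            mul_le_mul_of_nonneg_left e2 hC0
          have f4 : c₁ * 1 ≤ c₁ * (((n:ℝ)+1) ^ (q-1)) :=
            mul_le_mul_of_nonneg_left e3 hc₁
          have f5 : (0:ℝ) ≤ c₁ * (((n:ℝ)+1) ^ (q-1)) := by positivity
          simp only [hD] at f1 ihn ⊢
          nlinarith [f1, f2, f3, f4, f5]
    refine ⟨c₁ + D, by linarith, fun n hn => ?_⟩
    have hx1 : (1:ℝ) ≤ (n:ℝ) := by exact_mod_cast hn
    have e3 : (1:ℝ) ≤ (n:ℝ) ^ (q+1-1) := one_le_pow₀ hx1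
    have : q + 1 - 1 = q := rfl
    rw [this] at e3 ⊢
    have := key n
    nlinarith [pow_nonneg (le_trans zero_le_one hx1) q]
end

section
/- Let c > 0 and let t : ℕ × ℕ → ℝ satisfy: t(k, 2) ≥ c·k·log k for all k ≥ 1; and t((q/2)·k, q) ≥ k·t((q/2 − 1)·k, q−2) for every even q ≥ 4 and every k ≥ 1. Then for every even q ≥ 4 and every k ≥ 1: t((q/2)·k, q) ≥ c·k^{q/2}·log k. (Consequently, along the sequence n = (q/2)·k, t(n, q) = Ω(n^{q/2}·log n).) -/
/-- the recurrence derived from the hard instances yields the lower bound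
t((q/2)·k, q) ≥ c·k^(q/2)·log k for every even q = 2m ≥ 4 and every k ≥ 1. -/
theorem wfg_recurrence_lower_bound
    (c : ℝ) (hc : 0 < c) (t : ℕ → ℕ → ℝ)
    (hbase : ∀ k : ℕ, 1 ≤ k → c * k * Real.log k ≤ t k 2)
    (hrec : ∀ m : ℕ, 2 ≤ m → ∀ k : ℕ, 1 ≤ k →
      (k : ℝ) * t ((m - 1) * k) (2 * m - 2) ≤ t (m * k) (2 * m)) :
    ∀ m : ℕ, 2 ≤ m → ∀ k : ℕ, 1 ≤ k →
      c * (k : ℝ) ^ m * Real.log k ≤ t (m * k) (2 * m) := by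
  have main : ∀ m : ℕ, 1 ≤ m → ∀ k : ℕ, 1 ≤ k →
      c * (k : ℝ) ^ m * Real.log k ≤ t (m * k) (2 * m) := by
    intro m
    induction m with
    | zero => omega
    | succ n ih =>
      intro _ k hk
      rcases Nat.eq_zero_or_pos n with hn | hn
      · subst hn
        simpa [pow_one] using hbase k hk
      · have h1 : (1:ℕ) ≤ n := hn
        have hlog : 0 ≤ Real.log k := Real.log_natCast_nonneg k
        have hkpos : (0:ℝ) < (k:ℝ) := by exact_mod_cast hk
        have step := hrec (n+1) (by omega) k hk
        have hsub : (n+1) - 1 = n := by omega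
        have hsub2 : 2 * (n+1) - 2 = 2 * n := by omega
        rw [hsub, hsub2] at step
        have ihk := ih h1 k hk
        calc c * (k : ℝ) ^ (n+1) * Real.log k
            = (k:ℝ) * (c * (k:ℝ)^n * Real.log k) := by ring
          _ ≤ (k:ℝ) * t (n * k) (2 * n) := by
              exact mul_le_mul_of_nonneg_left ihk hkpos.le
          _ ≤ t ((n+1) * k) (2 * (n+1)) := step
  intro m hm k hk
  exact main m (by omega) k hk
end
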